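/- arXiv:1902.01614 — 7 statements merged into one kernel-verified Lean document; each statement's English description precedes it below -/
import Mathlib

section
/- Let Q ⊆ ℝⁿ be a polyhedral set and x̄ ∈ Q. Then there exists ε > 0 such that for all x ∈ Q with ‖x − x̄‖ < ε, the Fréchet normal cone satisfies N̂_Q(x) = N̂_Q(x̄) ∩ {x − x̄}^⊥. -/
open Filter Topology Set
open scoped Pointwise RealInnerProductSpace

noncomputable section

variable {V : Type*} [NormedAddCommGroup V] [InnerProductSpace ℝ V]

/-- The polar cone of a set: `A° = {y | ∀ x ∈ A, ⟪x, y⟫ ≤ 0}`. -/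
def polar (A : Set V) : Set V := {y | ∀ x ∈ A, ⟪x, y⟫ ≤ 0}

/-- The annihilator of a set: `A^⊥ = {y | ∀ x ∈ A, ⟪x, y⟫ = 0}`. -/
def annih (A : Set V) : Set V := {y | ∀ x ∈ A, ⟪x, y⟫ = 0}

/-- The Bouligand (contingent) tangent cone. -/
def bTangent (A : Set V) (x : V) : Set V :=
  {d | ∃ (t : ℕ → ℝ) (dk : ℕ → V), (∀ k, 0 < t k) ∧ Filter.Tendsto t Filter.atTop (nhds 0) ∧
    Filter.Tendsto dk Filter.atTop (nhds d) ∧ ∀ k, x + t k • dk k ∈ A}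

/-- The inner (adjacent) tangent cone. -/
def iTangent (A : Set V) (x : V) : Set V :=
  {d | ∀ t : ℕ → ℝ, (∀ k, 0 < t k) → Filter.Tendsto t Filter.atTop (nhds 0) →
    ∃ dk : ℕ → V, Filter.Tendsto dk Filter.atTop (nhds d) ∧ ∀ k, x + t k • dk k ∈ A}

/-- The outer second-order tangent set. -/
def bTangent2 (A : Set V) (x d : V) : Set V :=
  {h | ∃ (t : ℕ → ℝ) (hk : ℕ → V), (∀ k, 0 < t k) ∧ Filter.Tendsto t Filter.atTop (nhds 0) ∧
    Filter.Tendsto hk Filter.atTop (nhds h) ∧ ∀ k, x + t k • d + ((t k) ^ 2 / 2) • hk k ∈ A}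

/-- The inner second-order tangent set. -/
def iTangent2 (A : Set V) (x d : V) : Set V :=
  {h | ∀ t : ℕ → ℝ, (∀ k, 0 < t k) → Filter.Tendsto t Filter.atTop (nhds 0) →
    ∃ hk : ℕ → V, Filter.Tendsto hk Filter.atTop (nhds h) ∧
      ∀ k, x + t k • d + ((t k) ^ 2 / 2) • hk k ∈ A}

/-- The Fréchet (regular) normal cone: the polar of the Bouligand tangent cone. -/
def frechetNormal (A : Set V) (x : V) : Set V := polar (bTangent A x)

/-- A set is polyhedral if it is a finite intersection of closed half-spaces. -/
def IsPolyhedral (Q : Set V) : Prop :=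
  ∃ (k : ℕ) (a : Fin k → V) (b : Fin k → ℝ), Q = {x | ∀ i, ⟪a i, x⟫ ≤ b i}

lemma bTangent_halfspaces {k : ℕ} (a : Fin k → V) (b : Fin k → ℝ)
    (x : V) (hx : x ∈ {z : V | ∀ i, ⟪a i, z⟫ ≤ b i}) :
    bTangent {z : V | ∀ i, ⟪a i, z⟫ ≤ b i} x = {d | ∀ i, ⟪a i, x⟫ = b i → ⟪a i, d⟫ ≤ 0} := by
  ext d
  constructor
  · rintro ⟨t, dk, htpos, ht0, hdk, hmem⟩ i hi
    have hle : ∀ m, ⟪a i, dk m⟫ ≤ 0 := by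
      intro m
      have h1 := hmem m i
      rw [inner_add_right, real_inner_smul_right, hi] at h1
      nlinarith [htpos m]
    have hlim : Tendsto (fun m => ⟪a i, dk m⟫) atTop (𝓝 ⟪a i, d⟫) :=
      Filter.Tendsto.inner tendsto_const_nhds hdk
    exact le_of_tendsto hlim (Filter.Eventually.of_forall hle)
  · intro hd
    have hev : ∀ᶠ s : ℝ in 𝓝[>] 0, x + s • d ∈ {z : V | ∀ i, ⟪a i, z⟫ ≤ b i} := by
      simp only [mem_setOf_eq]
      rw [eventually_all]
      intro i
      rcases eq_or_lt_of_le (hx i) with hi | hi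
      · filter_upwards [self_mem_nhdsWithin] with s hs
        have hs' : (0:ℝ) < s := hs
        show ⟪a i, x + s • d⟫ ≤ b i
        rw [inner_add_right, real_inner_smul_right]
        nlinarith [hd i hi]
      · have hc : Continuous (fun s : ℝ => ⟪a i, x⟫ + s * ⟪a i, d⟫) := by continuity
        have h0 : (fun s : ℝ => ⟪a i, x⟫ + s * ⟪a i, d⟫) 0 < b i := by simpa using hi
        have hev' : ∀ᶠ s : ℝ in 𝓝 0, ⟪a i, x⟫ + s * ⟪a i, d⟫ < b i :=
          (hc.continuousAt).eventually_lt continuousAt_const h0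
        filter_upwards [hev'.filter_mono nhdsWithin_le_nhds] with s hs
        show ⟪a i, x + s • d⟫ ≤ b i
        rw [inner_add_right, real_inner_smul_right]
        linarith
    obtain ⟨δ, hδ, hsub⟩ := mem_nhdsGT_iff_exists_Ioo_subset.1 hev
    have hδ0 : (0:ℝ) < δ := hδ
    refine ⟨fun m => (δ/2) * (1/(m+1)), fun _ => d, ?_, ?_, tendsto_const_nhds, ?_⟩
    · intro m; positivity
    · simpa using tendsto_one_div_add_atTop_nhds_zero_nat.const_mul (δ/2)
    · intro m
      apply hsub
      constructor
      · positivity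
      · have h1 : (1:ℝ)/(m+1) ≤ 1 := by
          rw [div_le_one (by positivity)]
          have : (0:ℝ) ≤ (m:ℝ) := Nat.cast_nonneg m
          linarith
        nlinarith


theorem polyhedral_frechetNormal_local {n : ℕ} (Q : Set (EuclideanSpace ℝ (Fin n)))
    (hQ : IsPolyhedral Q) (x₀ : EuclideanSpace ℝ (Fin n)) (hx₀ : x₀ ∈ Q) :
    ∃ ε > (0 : ℝ), ∀ x ∈ Q, ‖x - x₀‖ < ε →
      frechetNormal Q x = frechetNormal Q x₀ ∩ annih {x - x₀} := by
  obtain ⟨k, a, b, rfl⟩ := hQ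
  have hx₀' : ∀ i, ⟪a i, x₀⟫ ≤ b i := hx₀
  have hev : ∀ᶠ x in 𝓝 x₀, ∀ i, ⟪a i, x₀⟫ < b i → ⟪a i, x⟫ < b i := by
    rw [eventually_all]
    intro i
    by_cases hi : ⟪a i, x₀⟫ < b i
    · have hcont : Continuous fun x : EuclideanSpace ℝ (Fin n) => ⟪a i, x⟫ :=
        Continuous.inner continuous_const continuous_id
      filter_upwards [(isOpen_lt hcont continuous_const).mem_nhds hi] with x hx _
      exact hx
    · filter_upwards with x hx
      exact absurd hx hi
  rw [Metric.eventually_nhds_iff] at hev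
  obtain ⟨ε, hε, hball⟩ := hev
  refine ⟨ε, hε, ?_⟩
  intro x hxQ hxε
  have hxQ' : ∀ i, ⟪a i, x⟫ ≤ b i := hxQ
  have hx' : ∀ i, ⟪a i, x₀⟫ < b i → ⟪a i, x⟫ < b i := hball (by rwa [dist_eq_norm])
  have hsub : ∀ i, ⟪a i, x⟫ = b i → ⟪a i, x₀⟫ = b i := by
    intro i hi
    rcases eq_or_lt_of_le (hx₀' i) with h | h
    · exact h
    · exact absurd hi (ne_of_lt (hx' i h))
  have hperp : ∀ i, ⟪a i, x⟫ = b i → ⟪a i, x - x₀⟫ = 0 := by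
    intro i hi
    rw [inner_sub_right, hi, hsub i hi, sub_self]
  rw [frechetNormal, frechetNormal, bTangent_halfspaces a b x hxQ,
    bTangent_halfspaces a b x₀ hx₀]
  ext y
  simp only [polar, annih, mem_inter_iff, mem_setOf_eq, mem_singleton_iff]
  constructor
  · intro hy
    refine ⟨fun d hd => hy d (fun i hi => hd i (hsub i hi)), ?_⟩
    rintro v rfl
    have h1 := hy (x - x₀) (fun i hi => le_of_eq (hperp i hi))
    have h2 := hy (-(x - x₀)) (fun i hi => by rw [inner_neg_right, hperp i hi, neg_zero])
    rw [inner_neg_left] at h2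
    linarith
  · rintro ⟨hy₀, hyann⟩ d hd
    have hxy : ⟪x - x₀, y⟫ = 0 := hyann (x - x₀) rfl
    have hlam : ∀ᶠ lam : ℝ in atTop, ∀ i, ⟪a i, x₀⟫ = b i →
        ⟪a i, d + lam • (x - x₀)⟫ ≤ 0 := by
      rw [eventually_all]
      intro i
      by_cases hi : ⟪a i, x₀⟫ = b i
      · by_cases hix : ⟪a i, x⟫ = b i
        · filter_upwards with lam _
          rw [inner_add_right, real_inner_smul_right, hperp i hix, mul_zero, add_zero]
          exact hd i hix
        · have hneg : ⟪a i, x - x₀⟫ < 0 := by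
            rw [inner_sub_right, hi]
            exact sub_neg.2 (lt_of_le_of_ne (hxQ' i) hix)
          have hbot : Tendsto (fun lam : ℝ => ⟪a i, d⟫ + lam * ⟪a i, x - x₀⟫) atTop atBot :=
            tendsto_atBot_add_const_left _ _ (tendsto_id.atTop_mul_const_of_neg hneg)
          filter_upwards [hbot.eventually (eventually_le_atBot 0)] with lam h _
          rwa [inner_add_right, real_inner_smul_right]
      · filter_upwards with lam h
        exact absurd h hi
    obtain ⟨lam, hlam'⟩ := hlam.exists
    have hfin := hy₀ (d + lam • (x - x₀)) hlam'
    rwa [inner_add_left, real_inner_smul_left, hxy, mul_zero, add_zero] at hfin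
end
end

section
/- Let S := ⋃_{i=1}^r S_i be a finite union of polyhedral sets S_i ⊆ ℝⁿ, let x ∈ S and d ∈ T_S(x). Then the outer second-order tangent set satisfies T²_S(x; d) = T_{T_S(x)}(d), the Bouligand tangent cone to T_S(x) at d; moreover, S is parabolically derivable at x in direction d, i.e., T²_S(x; d) = T^{♭,2}_S(x; d). -/
open Filter Topology Set
open scoped Pointwise RealInnerProductSpace

noncomputable section

variable {V : Type*} [NormedAddCommGroup V] [InnerProductSpace ℝ V]

lemma isClosed_halfspaces {k : ℕ} (a : Fin k → V) (b : Fin k → ℝ) :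
    IsClosed {y : V | ∀ i, ⟪a i, y⟫ ≤ b i} := by
  have : {y : V | ∀ i, ⟪a i, y⟫ ≤ b i} = ⋂ i, {y | ⟪a i, y⟫ ≤ b i} := by
    ext y; simp
  rw [this]
  exact isClosed_iInter fun i =>
    isClosed_le (Continuous.inner continuous_const continuous_id) continuous_const

lemma exists_Ioc_of_eventually {P : ℝ → Prop} (h : ∀ᶠ t in 𝓝[>] (0:ℝ), P t) :
    ∃ t0 : ℝ, 0 < t0 ∧ ∀ s, s ∈ Set.Ioc 0 t0 → P s := by
  rw [eventually_iff, mem_nhdsGT_iff_exists_Ioc_subset] at h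
  obtain ⟨t0, ht0, hsub⟩ := h
  exact ⟨t0, ht0, fun s hs => hsub hs⟩

lemma seq_aux (t0 : ℝ) (ht0 : 0 < t0) :
    (∀ k : ℕ, t0 / (k + 1) ∈ Set.Ioc 0 t0) ∧
      Tendsto (fun k : ℕ => t0 / (k + 1)) atTop (𝓝 0) := by
  constructor
  · intro k
    constructor
    · positivity
    · rw [div_le_iff₀ (by positivity)]
      nlinarith [Nat.cast_nonneg (α := ℝ) k]
  · have h1 : Tendsto (fun k : ℕ => t0 * (1 / (k + 1))) atTop (𝓝 (t0 * 0)) :=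
      tendsto_one_div_add_atTop_nhds_zero_nat.const_mul t0
    simpa [div_eq_mul_inv, one_div] using h1

lemma eventually_line_mem {k : ℕ} (a : Fin k → V) (b : Fin k → ℝ) {x v : V}
    (hx : ∀ i, ⟪a i, x⟫ ≤ b i) (hv : ∀ i, ⟪a i, x⟫ = b i → ⟪a i, v⟫ ≤ 0) :
    ∀ᶠ t in 𝓝[>] (0:ℝ), ∀ i, ⟪a i, x + t • v⟫ ≤ b i := by
  rw [eventually_all]
  intro i
  by_cases hact : ⟪a i, x⟫ = b i
  · filter_upwards [self_mem_nhdsWithin] with t ht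
    rw [inner_add_right, real_inner_smul_right]
    have h1 := hv i hact
    have h2 : (0:ℝ) < t := ht
    nlinarith
  · have hlt : ⟪a i, x⟫ < b i := lt_of_le_of_ne (hx i) hact
    have hcont : Tendsto (fun t : ℝ => ⟪a i, x + t • v⟫) (𝓝[>] 0) (𝓝 ⟪a i, x⟫) := by
      have : Tendsto (fun t : ℝ => ⟪a i, x + t • v⟫) (𝓝 0) (𝓝 ⟪a i, x + (0:ℝ) • v⟫) := by
        apply Filter.Tendsto.inner tendsto_const_nhds
        exact tendsto_const_nhds.add ((continuous_id.smul continuous_const).tendsto 0)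
      simpa using this.mono_left nhdsWithin_le_nhds
    exact hcont.eventually (Filter.Tendsto.eventually_lt_const hlt tendsto_id) |>.mono (fun t ht => le_of_lt ht)

lemma eventually_parabola_mem {k : ℕ} (a : Fin k → V) (b : Fin k → ℝ) {x d h : V}
    (hx : ∀ i, ⟪a i, x⟫ ≤ b i) (hd : ∀ i, ⟪a i, x⟫ = b i → ⟪a i, d⟫ ≤ 0)
    (hh : ∀ i, ⟪a i, x⟫ = b i → ⟪a i, d⟫ = 0 → ⟪a i, h⟫ ≤ 0) :
    ∀ᶠ t in 𝓝[>] (0:ℝ), ∀ i, ⟪a i, x + t • d + (t^2/2) • h⟫ ≤ b i := by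
  rw [eventually_all]
  intro i
  have hexp : ∀ t : ℝ, ⟪a i, x + t • d + (t^2/2) • h⟫
      = ⟪a i, x⟫ + t * ⟪a i, d⟫ + (t^2/2) * ⟪a i, h⟫ := by
    intro t
    rw [inner_add_right, inner_add_right, real_inner_smul_right, real_inner_smul_right]
  by_cases hact : ⟪a i, x⟫ = b i
  · rcases lt_or_eq_of_le (hd i hact) with hlt | heq
    · -- active, ⟪a i, d⟫ < 0
      have hcont : Tendsto (fun t : ℝ => ⟪a i, d⟫ + (t/2) * ⟪a i, h⟫) (𝓝[>] 0)
          (𝓝 (⟪a i, d⟫ + (0/2) * ⟪a i, h⟫)) := by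
        apply Filter.Tendsto.mono_left _ nhdsWithin_le_nhds
        exact tendsto_const_nhds.add ((tendsto_id.div_const 2).mul tendsto_const_nhds)
      have hev : ∀ᶠ t in 𝓝[>] (0:ℝ), ⟪a i, d⟫ + (t/2) * ⟪a i, h⟫ < 0 := by
        apply hcont.eventually_lt_const
        simpa using hlt
      filter_upwards [hev, self_mem_nhdsWithin] with t htneg htpos
      have htpos' : (0:ℝ) < t := htpos
      rw [hexp]
      nlinarith
    · -- active, ⟪a i, d⟫ = 0
      filter_upwards [self_mem_nhdsWithin] with t htpos
      have h1 := hh i hact heq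
      rw [hexp, heq]
      nlinarith [sq_nonneg t]
  · have hlt : ⟪a i, x⟫ < b i := lt_of_le_of_ne (hx i) hact
    have hcont : Tendsto (fun t : ℝ => ⟪a i, x⟫ + t * ⟪a i, d⟫ + (t^2/2) * ⟪a i, h⟫) (𝓝[>] 0)
        (𝓝 (⟪a i, x⟫ + 0 * ⟪a i, d⟫ + (0^2/2) * ⟪a i, h⟫)) := by
      apply Filter.Tendsto.mono_left _ nhdsWithin_le_nhds
      exact ((tendsto_const_nhds.add (tendsto_id.mul tendsto_const_nhds)).add
        (((tendsto_id.pow 2).div_const 2).mul tendsto_const_nhds))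
    have hev : ∀ᶠ t in 𝓝[>] (0:ℝ), ⟪a i, x⟫ + t * ⟪a i, d⟫ + (t^2/2) * ⟪a i, h⟫ < b i := by
      apply hcont.eventually_lt_const
      simpa using hlt
    filter_upwards [hev] with t ht
    rw [hexp]; exact le_of_lt ht

lemma bTangent_polyhedron {k : ℕ} (a : Fin k → V) (b : Fin k → ℝ) (x : V)
    (hx : ∀ i, ⟪a i, x⟫ ≤ b i) :
    bTangent {y : V | ∀ i, ⟪a i, y⟫ ≤ b i} x = {v | ∀ i, ⟪a i, x⟫ = b i → ⟪a i, v⟫ ≤ 0} := by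
  ext v
  constructor
  · rintro ⟨t, dk, htpos, ht0, hdk, hmem⟩ i hact
    have hkle : ∀ m, ⟪a i, dk m⟫ ≤ 0 := by
      intro m
      have h1 := hmem m i
      rw [inner_add_right, real_inner_smul_right, hact] at h1
      nlinarith [htpos m]
    have htend : Tendsto (fun m => ⟪a i, dk m⟫) atTop (𝓝 ⟪a i, v⟫) :=
      Filter.Tendsto.inner tendsto_const_nhds hdk
    exact le_of_tendsto htend (Filter.Eventually.of_forall hkle)
  · intro hv
    obtain ⟨t0, ht0, hIoc⟩ := exists_Ioc_of_eventually (eventually_line_mem a b hx hv)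
    obtain ⟨hmem, htend⟩ := seq_aux t0 ht0
    exact ⟨fun m => t0 / (m + 1), fun _ => v, fun m => (hmem m).1, htend,
      tendsto_const_nhds, fun m => hIoc _ (hmem m)⟩

lemma bTangent_tangent_poly {k : ℕ} (a : Fin k → V) (b : Fin k → ℝ) {x d : V}
    (hx : ∀ i, ⟪a i, x⟫ ≤ b i) (hd : ∀ i, ⟪a i, x⟫ = b i → ⟪a i, d⟫ ≤ 0) :
    bTangent {v : V | ∀ i, ⟪a i, x⟫ = b i → ⟪a i, v⟫ ≤ 0} d
      = {h | ∀ i, ⟪a i, x⟫ = b i → ⟪a i, d⟫ = 0 → ⟪a i, h⟫ ≤ 0} := by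
  classical
  set a' : Fin k → V := fun i => if ⟪a i, x⟫ = b i then a i else 0 with ha'
  set b' : Fin k → ℝ := fun i => if ⟪a i, x⟫ = b i then 0 else 1 with hb'
  have hset : {v : V | ∀ i, ⟪a i, x⟫ = b i → ⟪a i, v⟫ ≤ 0} = {v | ∀ i, ⟪a' i, v⟫ ≤ b' i} := by
    ext v
    simp only [mem_setOf_eq, ha', hb']
    constructor
    · intro hv i
      by_cases hact : ⟪a i, x⟫ = b i
      · simp only [if_pos hact]; exact hv i hact
      · simp only [if_neg hact, inner_zero_left]; norm_num
    · intro hv i hact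
      have := hv i
      simpa only [if_pos hact] using this
  have hdmem : ∀ i, ⟪a' i, d⟫ ≤ b' i := by
    intro i
    by_cases hact : ⟪a i, x⟫ = b i
    · simp only [ha', hb', if_pos hact]; exact hd i hact
    · simp only [ha', hb', if_neg hact, inner_zero_left]; norm_num
  rw [hset, bTangent_polyhedron a' b' d hdmem]
  ext h
  simp only [mem_setOf_eq]
  constructor
  · intro hh i hact hdeq
    have := hh i
    simp only [ha', hb', if_pos hact] at this
    exact this hdeq
  · intro hh i
    by_cases hact : ⟪a i, x⟫ = b i
    · simp only [ha', hb', if_pos hact]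
      exact hh i hact
    · simp only [ha', hb', if_neg hact, inner_zero_left]
      intro h01; exact absurd h01 (by norm_num)

lemma bTangent2_poly_subset {k : ℕ} (a : Fin k → V) (b : Fin k → ℝ) {x d : V} :
    bTangent2 {y : V | ∀ i, ⟪a i, y⟫ ≤ b i} x d
      ⊆ {h | ∀ i, ⟪a i, x⟫ = b i → ⟪a i, d⟫ = 0 → ⟪a i, h⟫ ≤ 0} := by
  rintro h ⟨t, hk, htpos, ht0, hhk, hmem⟩ i hact hdeq
  have hkle : ∀ m, ⟪a i, hk m⟫ ≤ 0 := by
    intro m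
    have h1 := hmem m i
    rw [inner_add_right, inner_add_right, real_inner_smul_right, real_inner_smul_right,
      hact, hdeq] at h1
    have := htpos m
    nlinarith [sq_nonneg (t m), pow_pos (htpos m) 2]
  exact le_of_tendsto (Filter.Tendsto.inner tendsto_const_nhds hhk)
    (Filter.Eventually.of_forall hkle)

lemma poly_subset_iTangent2 {k : ℕ} (a : Fin k → V) (b : Fin k → ℝ) {x d : V}
    (hx : ∀ i, ⟪a i, x⟫ ≤ b i) (hd : ∀ i, ⟪a i, x⟫ = b i → ⟪a i, d⟫ ≤ 0) :
    {h : V | ∀ i, ⟪a i, x⟫ = b i → ⟪a i, d⟫ = 0 → ⟪a i, h⟫ ≤ 0}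
      ⊆ iTangent2 {y : V | ∀ i, ⟪a i, y⟫ ≤ b i} x d := by
  classical
  intro h hh t htpos ht0
  obtain ⟨t0, ht0pos, hIoc⟩ := exists_Ioc_of_eventually (eventually_parabola_mem a b hx hd hh)
  refine ⟨fun m => if t m ≤ t0 then h else (-(2 / t m)) • d, ?_, ?_⟩
  · have hev : ∀ᶠ m in atTop, t m ≤ t0 := by
      have := ht0.eventually (ge_mem_nhds ht0pos)
      filter_upwards [this] with m hm
      exact hm
    apply Filter.Tendsto.congr' _ (tendsto_const_nhds (x := h))
    filter_upwards [hev] with m hm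
    simp [hm]
  · intro m
    by_cases hm : t m ≤ t0
    · simp only [if_pos hm]
      exact hIoc (t m) ⟨htpos m, hm⟩
    · simp only [if_neg hm]
      have htne : t m ≠ 0 := ne_of_gt (htpos m)
      have : ((t m) ^ 2 / 2) • ((-(2 / t m)) • d) = (-(t m)) • d := by
        rw [smul_smul]
        congr 1
        field_simp
      rw [this]
      have : x + t m • d + (-(t m)) • d = x := by
        rw [neg_smul]; abel
      rw [this]
      exact hx

lemma exists_subseq {ι : Type*} [Finite ι] {p : ι → ℕ → Prop} (hp : ∀ m, ∃ i, p i m) :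
    ∃ i, ∃ φ : ℕ → ℕ, StrictMono φ ∧ ∀ m, p i (φ m) := by
  have hfr : ∃ i, ∃ᶠ m in atTop, p i m := by
    by_contra hc
    push_neg at hc
    have hc' : ∀ i, ∀ᶠ m in atTop, ¬ p i m := by
      intro i
      rw [← Filter.not_frequently]
      exact Filter.not_frequently.mpr (hc i)
    have := Filter.eventually_all.mpr hc'
    obtain ⟨m, hm⟩ := this.exists
    obtain ⟨i, hi⟩ := hp m
    exact hm i hi
  obtain ⟨i, hi⟩ := hfr
  obtain ⟨φ, hφ, hφp⟩ := Filter.extraction_of_frequently_atTop hi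
  exact ⟨i, φ, hφ, hφp⟩

lemma iTangent2_subset_bTangent2 (A : Set V) (x d : V) : iTangent2 A x d ⊆ bTangent2 A x d := by
  intro h hh
  have htpos : ∀ m : ℕ, (0:ℝ) < 1 / (m + 1) := by
    intro m; positivity
  have htend : Tendsto (fun m : ℕ => (1:ℝ) / (m + 1)) atTop (𝓝 0) :=
    tendsto_one_div_add_atTop_nhds_zero_nat
  obtain ⟨hk, hhk, hmem⟩ := hh _ htpos htend
  exact ⟨_, hk, htpos, htend, hhk, hmem⟩

lemma iTangent2_mono {A B : Set V} (hAB : A ⊆ B) (x d : V) :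
    iTangent2 A x d ⊆ iTangent2 B x d := by
  intro h hh t htpos ht0
  obtain ⟨hk, hhk, hmem⟩ := hh t htpos ht0
  exact ⟨hk, hhk, fun m => hAB (hmem m)⟩

lemma bTangent_mono {A B : Set V} (hAB : A ⊆ B) (x : V) :
    bTangent A x ⊆ bTangent B x := by
  rintro v ⟨t, dk, htpos, ht0, hdk, hmem⟩
  exact ⟨t, dk, htpos, ht0, hdk, fun m => hAB (hmem m)⟩

lemma bTangent2_mono {A B : Set V} (hAB : A ⊆ B) (x d : V) :
    bTangent2 A x d ⊆ bTangent2 B x d := by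
  rintro h ⟨t, hk, htpos, ht0, hhk, hmem⟩
  exact ⟨t, hk, htpos, ht0, hhk, fun m => hAB (hmem m)⟩

/-- Forward direction of tangent cone of finite union. -/
lemma bTangent_iUnion_subset {ι : Type*} [Finite ι] (S : ι → Set V)
    (hcl : ∀ i, IsClosed (S i)) (x : V) {v : V} (hv : v ∈ bTangent (⋃ i, S i) x) :
    ∃ i, x ∈ S i ∧ v ∈ bTangent (S i) x := by
  obtain ⟨t, dk, htpos, ht0, hdk, hmem⟩ := hv
  have hp : ∀ m, ∃ i, x + t m • dk m ∈ S i := by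
    intro m; simpa using hmem m
  obtain ⟨i, φ, hφ, hφp⟩ := exists_subseq hp
  have hφtop : Tendsto φ atTop atTop := hφ.tendsto_atTop
  have ht0' : Tendsto (fun m => t (φ m)) atTop (𝓝 0) := ht0.comp hφtop
  have hdk' : Tendsto (fun m => dk (φ m)) atTop (𝓝 v) := hdk.comp hφtop
  have hxlim : Tendsto (fun m => x + t (φ m) • dk (φ m)) atTop (𝓝 x) := by
    have : Tendsto (fun m => x + t (φ m) • dk (φ m)) atTop (𝓝 (x + (0:ℝ) • v)) :=
      tendsto_const_nhds.add (ht0'.smul hdk')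
    simpa using this
  have hxmem : x ∈ S i := (hcl i).mem_of_tendsto hxlim (Filter.Eventually.of_forall hφp)
  exact ⟨i, hxmem, fun m => t (φ m), fun m => dk (φ m), fun m => htpos (φ m), ht0', hdk', hφp⟩

/-- Forward direction of second-order tangent set of finite union. -/
lemma bTangent2_iUnion_subset {ι : Type*} [Finite ι] (S : ι → Set V)
    (hcl : ∀ i, IsClosed (S i)) (x d : V) {h : V} (hv : h ∈ bTangent2 (⋃ i, S i) x d) :
    ∃ i, x ∈ S i ∧ d ∈ bTangent (S i) x ∧ h ∈ bTangent2 (S i) x d := by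
  obtain ⟨t, hk, htpos, ht0, hhk, hmem⟩ := hv
  have hp : ∀ m, ∃ i, x + t m • d + ((t m) ^ 2 / 2) • hk m ∈ S i := by
    intro m; simpa using hmem m
  obtain ⟨i, φ, hφ, hφp⟩ := exists_subseq hp
  have hφtop : Tendsto φ atTop atTop := hφ.tendsto_atTop
  have ht0' : Tendsto (fun m => t (φ m)) atTop (𝓝 0) := ht0.comp hφtop
  have hhk' : Tendsto (fun m => hk (φ m)) atTop (𝓝 h) := hhk.comp hφtop
  have htpos' : ∀ m, 0 < t (φ m) := fun m => htpos (φ m)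
  -- limit point x
  have hxlim : Tendsto (fun m => x + t (φ m) • d + ((t (φ m)) ^ 2 / 2) • hk (φ m)) atTop (𝓝 x) := by
    have h2 : Tendsto (fun m => (t (φ m)) ^ 2 / 2) atTop (𝓝 0) := by
      have := ((ht0'.pow 2).div_const 2)
      simpa using this
    have : Tendsto (fun m => x + t (φ m) • d + ((t (φ m)) ^ 2 / 2) • hk (φ m)) atTop
        (𝓝 (x + (0:ℝ) • d + (0:ℝ) • h)) :=
      (tendsto_const_nhds.add (ht0'.smul tendsto_const_nhds)).add (h2.smul hhk')
    simpa using this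
  have hxmem : x ∈ S i := (hcl i).mem_of_tendsto hxlim (Filter.Eventually.of_forall hφp)
  refine ⟨i, hxmem, ?_, ?_⟩
  · -- d ∈ bTangent (S i) x via dk m = d + (t (φ m) / 2) • hk (φ m)
    refine ⟨fun m => t (φ m), fun m => d + (t (φ m) / 2) • hk (φ m), htpos', ht0', ?_, ?_⟩
    · have h2 : Tendsto (fun m => t (φ m) / 2) atTop (𝓝 0) := by
        have := ht0'.div_const 2
        simpa using this
      have : Tendsto (fun m => d + (t (φ m) / 2) • hk (φ m)) atTop (𝓝 (d + (0:ℝ) • h)) :=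
        tendsto_const_nhds.add (h2.smul hhk')
      simpa using this
    · intro m
      have heq : x + t (φ m) • (d + (t (φ m) / 2) • hk (φ m))
          = x + t (φ m) • d + ((t (φ m)) ^ 2 / 2) • hk (φ m) := by
        rw [smul_add, smul_smul]
        rw [add_assoc]
        congr 2
        ring
      rw [heq]
      exact hφp m
  · exact ⟨fun m => t (φ m), fun m => hk (φ m), htpos', ht0', hhk', hφp⟩

lemma isClosed_cond {k : ℕ} (a : Fin k → V) (P : Fin k → Prop) :
    IsClosed {v : V | ∀ i, P i → ⟪a i, v⟫ ≤ 0} := by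
  classical
  have : {v : V | ∀ i, P i → ⟪a i, v⟫ ≤ 0} = ⋂ i, {v | P i → ⟪a i, v⟫ ≤ 0} := by
    ext v; simp
  rw [this]
  refine isClosed_iInter fun i => ?_
  by_cases hP : P i
  · have : {v : V | P i → ⟪a i, v⟫ ≤ 0} = {v | ⟪a i, v⟫ ≤ 0} := by
      ext v; simp [hP]
    rw [this]
    exact isClosed_le (Continuous.inner continuous_const continuous_id) continuous_const
  · have : {v : V | P i → ⟪a i, v⟫ ≤ 0} = univ := by
      ext v; simp [hP]
    rw [this]
    exact isClosed_univ

private theorem second_tangent_aux {n r : ℕ}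
    (S : Fin r → Set (EuclideanSpace ℝ (Fin n))) (hS : ∀ i, IsPolyhedral (S i))
    (x : EuclideanSpace ℝ (Fin n)) (hx : x ∈ ⋃ i, S i)
    (d : EuclideanSpace ℝ (Fin n)) (hd : d ∈ bTangent (⋃ i, S i) x) :
    bTangent2 (⋃ i, S i) x d = bTangent (bTangent (⋃ i, S i) x) d ∧
      bTangent2 (⋃ i, S i) x d = iTangent2 (⋃ i, S i) x d := by
  classical
  choose k a b hrep using hS
  set A := ⋃ i, S i with hA
  have hScl : ∀ i, IsClosed (S i) := by
    intro i; rw [hrep i]; exact isClosed_halfspaces _ _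
  -- Main inclusion 1 : bTangent2 A x d ⊆ bTangent (bTangent A x) d
  have hsub1 : bTangent2 A x d ⊆ bTangent (bTangent A x) d := by
    intro h hB2
    obtain ⟨i, hxS, hdT, h2⟩ := bTangent2_iUnion_subset S hScl x d hB2
    have hxS' : ∀ j, ⟪a i j, x⟫ ≤ b i j := by rwa [hrep i] at hxS
    have hdT' : ∀ j, ⟪a i j, x⟫ = b i j → ⟪a i j, d⟫ ≤ 0 := by
      rw [hrep i, bTangent_polyhedron (a i) (b i) x hxS'] at hdT
      exact hdT
    have hK : h ∈ {h | ∀ j, ⟪a i j, x⟫ = b i j → ⟪a i j, d⟫ = 0 → ⟪a i j, h⟫ ≤ 0} := by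
      rw [hrep i] at h2
      exact bTangent2_poly_subset (a i) (b i) h2
    rw [← bTangent_tangent_poly (a i) (b i) hxS' hdT'] at hK
    have hTsub : {v : EuclideanSpace ℝ (Fin n) | ∀ j, ⟪a i j, x⟫ = b i j → ⟪a i j, v⟫ ≤ 0}
        ⊆ bTangent A x := by
      rw [← bTangent_polyhedron (a i) (b i) x hxS', ← hrep i]
      exact bTangent_mono (subset_iUnion S i) x
    exact bTangent_mono hTsub d hK
  -- the tangent cone as a finite union of closed sets
  set S' : Fin r → Set (EuclideanSpace ℝ (Fin n)) :=
    fun i => if x ∈ S i then bTangent (S i) x else ∅ with hS'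
  have hS'cl : ∀ i, IsClosed (S' i) := by
    intro i
    rw [hS']
    by_cases hxi : x ∈ S i
    · simp only [if_pos hxi]
      have hxS' : ∀ j, ⟪a i j, x⟫ ≤ b i j := by rwa [hrep i] at hxi
      rw [hrep i, bTangent_polyhedron (a i) (b i) x hxS']
      exact isClosed_cond (a i) _
    · simp only [if_neg hxi]
      exact isClosed_empty
  have hT : bTangent A x = ⋃ i, S' i := by
    apply Set.Subset.antisymm
    · intro v hv
      obtain ⟨i, hxi, hvi⟩ := bTangent_iUnion_subset S hScl x hv
      exact mem_iUnion.mpr ⟨i, by simp only [hS', if_pos hxi]; exact hvi⟩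
    · intro v hv
      obtain ⟨i, hvi⟩ := mem_iUnion.mp hv
      by_cases hxi : x ∈ S i
      · simp only [hS', if_pos hxi] at hvi
        exact bTangent_mono (subset_iUnion S i) x hvi
      · simp only [hS', if_neg hxi] at hvi
        exact absurd hvi (notMem_empty v)
  -- Main inclusion 2 : bTangent (bTangent A x) d ⊆ iTangent2 A x d
  have hsub2 : bTangent (bTangent A x) d ⊆ iTangent2 A x d := by
    intro h hTT
    rw [hT] at hTT
    obtain ⟨i, hdi, hhi⟩ := bTangent_iUnion_subset S' hS'cl d hTT
    by_cases hxi : x ∈ S i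
    · have hxS' : ∀ j, ⟪a i j, x⟫ ≤ b i j := by rwa [hrep i] at hxi
      have hSieq : S' i = {v : EuclideanSpace ℝ (Fin n) |
          ∀ j, ⟪a i j, x⟫ = b i j → ⟪a i j, v⟫ ≤ 0} := by
        rw [hS']
        simp only [if_pos hxi]
        rw [hrep i, bTangent_polyhedron (a i) (b i) x hxS']
      rw [hSieq] at hdi hhi
      have hdT' : ∀ j, ⟪a i j, x⟫ = b i j → ⟪a i j, d⟫ ≤ 0 := hdi
      rw [bTangent_tangent_poly (a i) (b i) hxS' hdT'] at hhi
      have hI2 : h ∈ iTangent2 (S i) x d := by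
        rw [hrep i]
        exact poly_subset_iTangent2 (a i) (b i) hxS' hdT' hhi
      exact iTangent2_mono (subset_iUnion S i) x d hI2
    · exfalso
      rw [hS'] at hdi
      simp only [if_neg hxi] at hdi
      exact notMem_empty d hdi
  have hsub3 : iTangent2 A x d ⊆ bTangent2 A x d := iTangent2_subset_bTangent2 A x d
  exact ⟨Set.Subset.antisymm hsub1 (hsub2.trans hsub3),
    Set.Subset.antisymm (hsub1.trans hsub2) hsub3⟩


theorem second_tangent_of_union_of_polyhedra {n r : ℕ}
    (S : Fin r → Set (EuclideanSpace ℝ (Fin n))) (hS : ∀ i, IsPolyhedral (S i))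
    (x : EuclideanSpace ℝ (Fin n)) (hx : x ∈ ⋃ i, S i)
    (d : EuclideanSpace ℝ (Fin n)) (hd : d ∈ bTangent (⋃ i, S i) x) :
    bTangent2 (⋃ i, S i) x d = bTangent (bTangent (⋃ i, S i) x) d ∧
      bTangent2 (⋃ i, S i) x d = iTangent2 (⋃ i, S i) x d :=
  second_tangent_aux S hS x hx d hd
end
end

section
/- Let S := ⋃_{i=1}^r S_i be a finite union of polyhedral sets S_i ⊆ ℝⁿ, let x ∈ S, d ∈ T_S(x), and I(x) := {i | x ∈ S_i}. Then T²_S(x; d) + ⋂_{i ∈ I(x)} T_{S_i}(x)°^⊥ ⊆ T²_S(x; d). -/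
open Filter Topology Set
open scoped Pointwise RealInnerProductSpace

noncomputable section

variable {V : Type*} [NormedAddCommGroup V] [InnerProductSpace ℝ V]

theorem second_tangent_add_lineality {n r : ℕ}
    (S : Fin r → Set (EuclideanSpace ℝ (Fin n))) (hS : ∀ i, IsPolyhedral (S i))
    (x : EuclideanSpace ℝ (Fin n)) (hx : x ∈ ⋃ i, S i)
    (d : EuclideanSpace ℝ (Fin n)) (hd : d ∈ bTangent (⋃ i, S i) x) :
    bTangent2 (⋃ i, S i) x d + ⋂ i ∈ {j | x ∈ S j}, annih (polar (bTangent (S i) x))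
      ⊆ bTangent2 (⋃ i, S i) x d := by
  rintro z hz
  rw [Set.mem_add] at hz
  obtain ⟨h, hh, w, hw, rfl⟩ := hz
  obtain ⟨t, hk, htpos, ht0, hhk, hmem⟩ := hh
  have hchoice : ∀ k, ∃ i, x + t k • d + ((t k) ^ 2 / 2) • hk k ∈ S i := fun k => by
    simpa using hmem k
  choose f hf using hchoice
  obtain ⟨i, hi⟩ := Finite.exists_infinite_fiber f
  set e : ℕ ↪ (f ⁻¹' {i}) := hi.natEmbedding with he
  set φ : ℕ → ℕ := fun k => (e k : ℕ) with hφ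
  have hφinj : Function.Injective φ := fun a b hab => e.injective (Subtype.ext hab)
  have hφtop : Tendsto φ atTop atTop := by
    rw [← Nat.cofinite_eq_atTop]
    exact hφinj.tendsto_cofinite
  have hfi : ∀ k, f (φ k) = i := fun k => (e k).2
  have hmem' : ∀ k, x + t (φ k) • d + ((t (φ k)) ^ 2 / 2) • hk (φ k) ∈ S i := fun k => by
    rw [← hfi k]; exact hf (φ k)
  obtain ⟨m, a, b, hQ⟩ := hS i
  have ht0' : Tendsto (fun k => t (φ k)) atTop (𝓝 0) := ht0.comp hφtop
  have hhk' : Tendsto (fun k => hk (φ k)) atTop (𝓝 h) := hhk.comp hφtop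
  have hsq : Tendsto (fun k => (t (φ k)) ^ 2 / 2) atTop (𝓝 0) := by
    have := (ht0'.pow 2).div_const 2
    simpa using this
  have hy : Tendsto (fun k => x + t (φ k) • d + ((t (φ k)) ^ 2 / 2) • hk (φ k)) atTop (𝓝 x) := by
    have : Tendsto (fun k => x + t (φ k) • d + ((t (φ k)) ^ 2 / 2) • hk (φ k)) atTop
        (𝓝 (x + (0 : ℝ) • d + (0 : ℝ) • h)) :=
      (tendsto_const_nhds.add (ht0'.smul_const d)).add (hsq.smul hhk')
    simpa using this
  have hxS : x ∈ S i := by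
    rw [hQ]
    intro j
    have hcont : Tendsto (fun k => ⟪a j, x + t (φ k) • d + ((t (φ k)) ^ 2 / 2) • hk (φ k)⟫)
        atTop (𝓝 ⟪a j, x⟫) := tendsto_const_nhds.inner hy
    refine le_of_tendsto hcont (Eventually.of_forall fun k => ?_)
    have := hmem' k
    rw [hQ] at this
    exact this j
  have hwann : w ∈ annih (polar (bTangent (S i) x)) := Set.mem_iInter₂.mp hw i hxS
  have hactive : ∀ j, ⟪a j, x⟫ = b j → ⟪a j, w⟫ = 0 := by
    intro j hj
    apply hwann
    intro v hv
    obtain ⟨s, dk, hspos, hs0, hdk, hsm⟩ := hv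
    have key : ∀ k, ⟪a j, dk k⟫ ≤ 0 := by
      intro k
      have hm := hsm k
      rw [hQ] at hm
      have h1 := hm j
      rw [inner_add_right, real_inner_smul_right, hj] at h1
      nlinarith [hspos k]
    have hc : Tendsto (fun k => ⟪a j, dk k⟫) atTop (𝓝 ⟪a j, v⟫) :=
      tendsto_const_nhds.inner hdk
    rw [real_inner_comm]
    exact le_of_tendsto hc (Eventually.of_forall key)
  have hev : ∀ᶠ k in atTop,
      ∀ j, ⟪a j, x + t (φ k) • d + ((t (φ k)) ^ 2 / 2) • (hk (φ k) + w)⟫ ≤ b j := by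
    rw [eventually_all]
    intro j
    have hxj : ⟪a j, x⟫ ≤ b j := by rw [hQ] at hxS; exact hxS j
    rcases eq_or_lt_of_le hxj with heq | hlt
    · refine Eventually.of_forall fun k => ?_
      have hw0 : ⟪a j, w⟫ = 0 := hactive j heq
      have hm := hmem' k
      rw [hQ] at hm
      have h1 := hm j
      rw [inner_add_right, inner_add_right, real_inner_smul_right, real_inner_smul_right] at h1
      rw [inner_add_right, inner_add_right, real_inner_smul_right, real_inner_smul_right,
        inner_add_right, hw0]
      linarith
    · have hlim : Tendsto (fun k => x + t (φ k) • d + ((t (φ k)) ^ 2 / 2) • (hk (φ k) + w))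
          atTop (𝓝 x) := by
        have : Tendsto (fun k => x + t (φ k) • d + ((t (φ k)) ^ 2 / 2) • (hk (φ k) + w)) atTop
            (𝓝 (x + (0 : ℝ) • d + (0 : ℝ) • (h + w))) :=
          (tendsto_const_nhds.add (ht0'.smul_const d)).add
            (hsq.smul (hhk'.add tendsto_const_nhds))
        simpa using this
      have hc : Tendsto (fun k => ⟪a j, x + t (φ k) • d + ((t (φ k)) ^ 2 / 2) • (hk (φ k) + w)⟫)
          atTop (𝓝 ⟪a j, x⟫) := tendsto_const_nhds.inner hlim
      exact (hc.eventually_lt_const hlt).mono fun k hk => le_of_lt hk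
  obtain ⟨N, hN⟩ := eventually_atTop.mp hev
  refine ⟨fun k => t (φ (k + N)), fun k => hk (φ (k + N)) + w, fun k => htpos _, ?_, ?_, ?_⟩
  · exact ht0'.comp (tendsto_add_atTop_nat N)
  · exact (hhk'.add tendsto_const_nhds).comp (tendsto_add_atTop_nat N)
  · intro k
    refine Set.mem_iUnion.mpr ⟨i, ?_⟩
    rw [hQ]
    exact hN (k + N) (Nat.le_add_left N k)
end
end

section
/- Let P : ℝⁿ → ℝᵐ be twice continuously differentiable, Ω ⊆ ℝᵐ closed, Y := {x | P(x) ∈ Ω}, and x̄ ∈ Y. Then for each d ∈ T_Y(x̄): T²_Y(x̄; d) ⊆ {h ∈ ℝⁿ | ∇P(x̄)h + ∇²P(x̄)[d,d] ∈ T²_Ω(P(x̄); ∇P(x̄)d)}. -/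
open Filter Topology Set
open scoped Pointwise RealInnerProductSpace

noncomputable section

variable {V : Type*} [NormedAddCommGroup V] [InnerProductSpace ℝ V]

open Asymptotics

set_option maxHeartbeats 1000000

private lemma taylor2_littleO {E F : Type*} [NormedAddCommGroup E] [NormedSpace ℝ E]
    [NormedAddCommGroup F] [NormedSpace ℝ F]
    {P : E → F} (hP : ContDiff ℝ 2 P) (x₀ : E) :
    (fun v => P (x₀ + v) - P x₀ - fderiv ℝ P x₀ v
      - (1/2 : ℝ) • fderiv ℝ (fderiv ℝ P) x₀ v v) =o[𝓝 (0:E)] fun v => ‖v‖ ^ 2 := by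
  set A := fderiv ℝ P x₀ with hA
  set B := fderiv ℝ (fderiv ℝ P) x₀ with hB
  have hdiff : Differentiable ℝ P := hP.differentiable two_ne_zero
  have hd1 : ∀ y, HasFDerivAt P (fderiv ℝ P y) y := fun y => (hdiff y).hasFDerivAt
  have hfd : HasFDerivAt (fderiv ℝ P) B x₀ :=
    ((hP.fderiv_right (m := 1) (by norm_num)).differentiable one_ne_zero x₀).hasFDerivAt
  have hsym : ∀ u w : E, B u w = B w u := second_derivative_symmetric hd1 hfd
  have hq : ∀ w : E, HasFDerivAt (fun v => B v v) ((2:ℝ) • B w) w := by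
    intro w
    have hpair : HasFDerivAt (fun v : E => (v, v))
        ((ContinuousLinearMap.id ℝ E).prod (ContinuousLinearMap.id ℝ E)) w :=
      (hasFDerivAt_id w).prodMk (hasFDerivAt_id w)
    have h1 := HasFDerivAt.comp (g := fun p : E × E => B p.1 p.2) (f := fun v : E => (v, v)) w
      (B.isBoundedBilinearMap.hasFDerivAt (w, w)) hpair
    convert h1 using 1
    all_goals ext u
    all_goals simp [hsym u w, two_smul]
  have hg : ∀ w : E, HasFDerivAt (fun v => P (x₀ + v) - A v - (1/2:ℝ) • B v v)
      ((fderiv ℝ P (x₀ + w)) - A - B w) w := by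
    intro w
    have h1 : HasFDerivAt (fun v => P (x₀ + v)) (fderiv ℝ P (x₀ + w)) w := by
      have := (hd1 (x₀ + w)).comp w ((hasFDerivAt_id w).const_add x₀)
      simpa [Function.comp_def] using this
    have h2 := (hq w).const_smul (1/2:ℝ)
    have he : (1/2:ℝ) • ((2:ℝ) • B w) = B w := by rw [smul_smul]; norm_num
    rw [he] at h2
    exact (h1.sub A.hasFDerivAt).sub h2
  rw [isLittleO_iff]
  intro ε hε
  have hlil : (fun w => fderiv ℝ P (x₀ + w) - A - B w) =o[𝓝 (0:E)] fun w => w :=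
    hasFDerivAt_iff_isLittleO_nhds_zero.1 hfd
  have hev : ∀ᶠ w in 𝓝 (0:E), ‖fderiv ℝ P (x₀ + w) - A - B w‖ ≤ ε * ‖w‖ :=
    isLittleO_iff.1 hlil hε
  obtain ⟨δ, δpos, hδ⟩ := Metric.eventually_nhds_iff.1 hev
  filter_upwards [Metric.ball_mem_nhds (0:E) δpos] with v hv
  rw [mem_ball_zero_iff] at hv
  have key : ∀ w ∈ Metric.closedBall (0:E) ‖v‖,
      ‖fderiv ℝ P (x₀ + w) - A - B w‖ ≤ ε * ‖v‖ := by
    intro w hw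
    rw [Metric.mem_closedBall, dist_zero_right] at hw
    have h1 := hδ (show dist w 0 < δ by rw [dist_zero_right]; exact lt_of_le_of_lt hw hv)
    refine h1.trans ?_
    gcongr
  have mv := (convex_closedBall (0:E) ‖v‖).norm_image_sub_le_of_norm_hasFDerivWithin_le
    (fun w _ => (hg w).hasFDerivWithinAt) key (Metric.mem_closedBall_self (norm_nonneg v))
    (by rw [Metric.mem_closedBall, dist_zero_right])
  simp only [add_zero, map_zero, smul_zero, sub_zero, sub_zero] at mv
  calc ‖P (x₀ + v) - P x₀ - A v - (1/2:ℝ) • B v v‖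
      = ‖P (x₀ + v) - A v - (1/2:ℝ) • B v v - P x₀‖ := by congr 1; abel
    _ ≤ ε * ‖v‖ * ‖v‖ := mv
    _ = ε * ‖‖v‖ ^ 2‖ := by rw [Real.norm_of_nonneg (by positivity)]; ring

theorem second_tangent_preimage_subset {n m : ℕ}
    (P : EuclideanSpace ℝ (Fin n) → EuclideanSpace ℝ (Fin m)) (hP : ContDiff ℝ 2 P)
    (Ω : Set (EuclideanSpace ℝ (Fin m))) (hΩ : IsClosed Ω)
    (x₀ : EuclideanSpace ℝ (Fin n)) (hx₀ : P x₀ ∈ Ω)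
    (d : EuclideanSpace ℝ (Fin n)) (hd : d ∈ bTangent {x | P x ∈ Ω} x₀) :
    bTangent2 {x | P x ∈ Ω} x₀ d ⊆
      {h | fderiv ℝ P x₀ h + fderiv ℝ (fderiv ℝ P) x₀ d d
            ∈ bTangent2 Ω (P x₀) (fderiv ℝ P x₀ d)} := by
  intro h hh
  obtain ⟨t, hk, ht, ht0, hhk, hmem⟩ := hh
  set A := fderiv ℝ P x₀ with hA
  set B := fderiv ℝ (fderiv ℝ P) x₀ with hB
  set s : ℕ → ℝ := fun k => (t k) ^ 2 / 2 with hs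
  have hspos : ∀ k, 0 < s k := fun k => by have := ht k; positivity
  set v : ℕ → EuclideanSpace ℝ (Fin n) := fun k => t k • d + s k • hk k with hv
  set R : EuclideanSpace ℝ (Fin n) → EuclideanSpace ℝ (Fin m) :=
    fun w => P (x₀ + w) - P x₀ - A w - (1/2:ℝ) • B w w with hR
  set y : ℕ → EuclideanSpace ℝ (Fin m) :=
    fun k => (s k)⁻¹ • (P (x₀ + v k) - P x₀ - t k • A d) with hy
  refine ⟨t, y, ht, ht0, ?_, ?_⟩
  · -- Tendsto y atTop (𝓝 (A h + B d d))
    have hy' : ∀ k, y k = (s k)⁻¹ • R (v k) +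
        (A (hk k) + (B d d + ((t k / 2) • (B d (hk k) + B (hk k) d)
          + ((t k)^2/4) • B (hk k) (hk k)))) := by
      intro k
      have hexp : P (x₀ + v k) - P x₀ - t k • A d
          = R (v k) + s k • (A (hk k) + (B d d + ((t k / 2) • (B d (hk k) + B (hk k) d)
            + ((t k)^2/4) • B (hk k) (hk k)))) := by
        have h0 : P (x₀ + v k) - P x₀ - t k • A d
            = R (v k) + A (v k) + (1/2:ℝ) • B (v k) (v k) - t k • A d := by
          simp only [hR]; abel
        rw [h0]
        simp only [hv, map_add, map_smul, ContinuousLinearMap.add_apply,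
          ContinuousLinearMap.smul_apply, hs]
        match_scalars <;> ring
      show (s k)⁻¹ • (P (x₀ + v k) - P x₀ - t k • A d) = _
      rw [hexp, smul_add, inv_smul_smul₀ (ne_of_gt (hspos k))]
    have hs0 : Tendsto s atTop (𝓝 0) := by
      have := (ht0.mul ht0).div_const 2
      simpa [hs, pow_two] using this
    have hvlim : Tendsto v atTop (𝓝 0) := by
      have h1 := ht0.smul_const d
      have h2 := hs0.smul hhk
      simpa using h1.add h2
    have hT1 : Tendsto (fun k => (s k)⁻¹ • R (v k)) atTop (𝓝 0) := by
      have hcomp : (fun k => R (v k)) =o[atTop] fun k => ‖v k‖ ^ 2 :=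
        (taylor2_littleO hP x₀).comp_tendsto hvlim
      have hbound : ∀ᶠ k in atTop, ‖hk k‖ < ‖h‖ + 1 :=
        hhk.norm.eventually_lt_const (lt_add_one ‖h‖)
      have ht1 : ∀ᶠ k in atTop, t k < 1 := ht0.eventually_lt_const one_pos
      have hBigO : (fun k => ‖v k‖ ^ 2) =O[atTop] s := by
        rw [isBigO_iff]
        refine ⟨2 * (‖d‖ + (‖h‖ + 1) / 2) ^ 2, ?_⟩
        filter_upwards [hbound, ht1] with k hb h1
        have hvle : ‖v k‖ ≤ t k * (‖d‖ + (‖h‖ + 1) / 2) := by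
          calc ‖v k‖ ≤ ‖t k • d‖ + ‖s k • hk k‖ := norm_add_le _ _
            _ = t k * ‖d‖ + s k * ‖hk k‖ := by
                rw [norm_smul, norm_smul, Real.norm_of_nonneg (ht k).le,
                  Real.norm_of_nonneg (hspos k).le]
            _ ≤ t k * ‖d‖ + s k * (‖h‖ + 1) := by gcongr
            _ ≤ t k * ‖d‖ + (t k / 2) * (‖h‖ + 1) := by
                have hsle : s k ≤ t k / 2 := by
                  show t k ^ 2 / 2 ≤ t k / 2
                  nlinarith [ht k, h1]
                gcongr
            _ = t k * (‖d‖ + (‖h‖ + 1) / 2) := by ring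
        have hsq : ‖v k‖ ^ 2 ≤ (t k * (‖d‖ + (‖h‖ + 1) / 2)) ^ 2 := by
          gcongr
        rw [Real.norm_of_nonneg (by positivity : (0:ℝ) ≤ ‖v k‖ ^ 2),
          Real.norm_of_nonneg (hspos k).le]
        calc ‖v k‖ ^ 2 ≤ (t k * (‖d‖ + (‖h‖ + 1) / 2)) ^ 2 := hsq
          _ = 2 * (‖d‖ + (‖h‖ + 1) / 2) ^ 2 * s k := by rw [hs]; ring
      have hlo : (fun k => ‖R (v k)‖) =o[atTop] s := (hcomp.trans_isBigO hBigO).norm_left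
      have hdiv := hlo.tendsto_div_nhds_zero
      rw [tendsto_zero_iff_norm_tendsto_zero]
      refine hdiv.congr fun k => ?_
      rw [norm_smul, Real.norm_of_nonneg (inv_nonneg.2 (hspos k).le), div_eq_inv_mul]
    have hT2 : Tendsto (fun k => A (hk k)) atTop (𝓝 (A h)) :=
      (A.continuous.tendsto h).comp hhk
    have hT4 : Tendsto (fun k => (t k / 2) • (B d (hk k) + B (hk k) d)) atTop (𝓝 0) := by
      have hin : Tendsto (fun k => B d (hk k) + B (hk k) d) atTop (𝓝 (B d h + B h d)) := by
        have ha : Tendsto (fun k => B d (hk k)) atTop (𝓝 (B d h)) :=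
          ((B d).continuous.tendsto h).comp hhk
        have hb : Tendsto (fun k => B (hk k) d) atTop (𝓝 (B h d)) :=
          ((B.flip d).continuous.tendsto h).comp hhk
        exact ha.add hb
      have := (ht0.div_const 2).smul hin
      simpa using this
    have hT5 : Tendsto (fun k => ((t k)^2/4) • B (hk k) (hk k)) atTop (𝓝 0) := by
      have hcont : Continuous (fun x : EuclideanSpace ℝ (Fin n) => B x x) :=
        B.isBoundedBilinearMap.continuous.comp (continuous_id.prodMk continuous_id)
      have hin : Tendsto (fun k => B (hk k) (hk k)) atTop (𝓝 (B h h)) :=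
        (hcont.tendsto h).comp hhk
      have hsc : Tendsto (fun k => (t k)^2/4) atTop (𝓝 0) := by
        have := (ht0.mul ht0).div_const 4
        simpa [pow_two] using this
      have := hsc.smul hin
      simpa using this
    have hconst : Tendsto (fun _ : ℕ => B d d) atTop (𝓝 (B d d)) := tendsto_const_nhds
    have := hT1.add (hT2.add (hconst.add (hT4.add hT5)))
    rw [show (0:EuclideanSpace ℝ (Fin m)) + (A h + (B d d + ((0:EuclideanSpace ℝ (Fin m))
        + (0:EuclideanSpace ℝ (Fin m)))) ) = A h + B d d by abel] at this
    refine this.congr fun k => ?_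
    rw [hy' k]
  · -- membership
    intro k
    have hmem' : P (x₀ + v k) ∈ Ω := by
      have := hmem k
      simpa [hv, hs, add_assoc] using this
    have : P x₀ + t k • A d + ((t k)^2/2) • y k = P (x₀ + v k) := by
      rw [hy]
      rw [show ((t k)^2/2 : ℝ) = s k from rfl, smul_inv_smul₀ (ne_of_gt (hspos k))]
      abel
    rw [this]
    exact hmem'
end
end

section
/- Let P : ℝⁿ → ℝᵐ be twice continuously differentiable, Ω ⊆ ℝᵐ closed, Y := {x | P(x) ∈ Ω} nonempty, and suppose the feasibility map x ↦ {P(x)} − Ω is metrically subregular at (x̄, 0) for some x̄ ∈ Y. Then for each d ∈ T_Y(x̄): T²_Y(x̄; d) = {h ∈ ℝⁿ | ∇P(x̄)h + ∇²P(x̄)[d,d] ∈ T²_Ω(P(x̄); ∇P(x̄)d)}. -/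
open Filter Topology Set
open scoped Pointwise RealInnerProductSpace

noncomputable section

variable {V : Type*} [NormedAddCommGroup V] [InnerProductSpace ℝ V]

set_option maxHeartbeats 1000000 in
private lemma taylor2 {E F : Type*} [NormedAddCommGroup E] [NormedSpace ℝ E]
    [NormedAddCommGroup F] [NormedSpace ℝ F] (f : E → F) (hf : ContDiff ℝ 2 f) (x₀ : E)
    {ε : ℝ} (hε : 0 < ε) :
    ∃ δ > (0:ℝ), ∀ v : E, ‖v‖ ≤ δ →
      ‖f (x₀ + v) - f x₀ - fderiv ℝ f x₀ v - (1/2 : ℝ) • (fderiv ℝ (fderiv ℝ f) x₀ v v)‖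
        ≤ ε * ‖v‖ ^ 2 := by
  set A := fderiv ℝ f x₀ with hA
  set B := fderiv ℝ (fderiv ℝ f) x₀ with hBdef
  have hf1 : ContDiff ℝ 1 (fderiv ℝ f) := hf.fderiv_right (by norm_num)
  have hdf : Differentiable ℝ f := hf.differentiable (by norm_num)
  have hB : HasFDerivAt (fderiv ℝ f) B x₀ :=
    ((hf1.differentiable (by norm_num)) x₀).hasFDerivAt
  have hlo := hasFDerivAt_iff_isLittleO_nhds_zero.1 hB
  rw [Asymptotics.isLittleO_iff] at hlo
  have hev := hlo (c := ε) hε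
  rcases Metric.eventually_nhds_iff_ball.1 hev with ⟨δ, hδpos, hδ⟩
  refine ⟨δ/2, by positivity, fun v hv => ?_⟩
  -- the curve
  set g : ℝ → F := fun s => f (x₀ + s • v) - s • (A v) - (s^2/2) • (B v v) with hg
  have key : ∀ s ∈ Icc (0:ℝ) 1, HasDerivWithinAt g
      ((fderiv ℝ f (x₀ + s • v)) v - A v - s • (B v v)) (Icc 0 1) s := by
    intro s hs
    have h1 : HasDerivAt (fun s : ℝ => x₀ + s • v) v s := by
      simpa using ((hasDerivAt_id s).smul_const v).const_add x₀
    have h2 : HasDerivAt (fun s : ℝ => f (x₀ + s • v)) ((fderiv ℝ f (x₀ + s • v)) v) s :=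
      (hdf (x₀ + s • v)).hasFDerivAt.comp_hasDerivAt s h1
    have h3 : HasDerivAt (fun s : ℝ => s • (A v)) (A v) s := by
      simpa using (hasDerivAt_id s).smul_const (A v)
    have h4 : HasDerivAt (fun s : ℝ => (s^2/2) • (B v v)) (s • (B v v)) s := by
      have : HasDerivAt (fun s : ℝ => s^2/2) s s := by
        simpa using ((hasDerivAt_pow 2 s).div_const 2)
      simpa using this.smul_const (B v v)
    exact ((h2.sub h3).sub h4).hasDerivWithinAt
  have bound : ∀ s ∈ Ico (0:ℝ) 1,
      ‖(fderiv ℝ f (x₀ + s • v)) v - A v - s • (B v v)‖ ≤ ε * ‖v‖^2 := by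
    intro s hs
    have hsv : s • v ∈ Metric.ball (0:E) δ := by
      rw [Metric.mem_ball, dist_zero_right, norm_smul, Real.norm_eq_abs,
        abs_of_nonneg hs.1]
      calc s * ‖v‖ ≤ 1 * (δ/2) := by
            apply mul_le_mul hs.2.le hv (norm_nonneg v) zero_le_one
        _ < δ := by linarith
    have hest := hδ (s • v) hsv
    have heq : (fderiv ℝ f (x₀ + s • v)) v - A v - s • (B v v)
        = ((fderiv ℝ f (x₀ + s • v)) - fderiv ℝ f x₀ - B (s • v)) v := by
      simp [ContinuousLinearMap.sub_apply, map_smul, ContinuousLinearMap.smul_apply, hA]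
    rw [heq]
    calc ‖((fderiv ℝ f (x₀ + s • v)) - fderiv ℝ f x₀ - B (s • v)) v‖
        ≤ ‖(fderiv ℝ f (x₀ + s • v)) - fderiv ℝ f x₀ - B (s • v)‖ * ‖v‖ :=
          ContinuousLinearMap.le_opNorm _ v
      _ ≤ (ε * ‖s • v‖) * ‖v‖ := by
          exact mul_le_mul_of_nonneg_right hest (norm_nonneg v)
      _ ≤ ε * ‖v‖^2 := by
          rw [norm_smul, Real.norm_eq_abs, abs_of_nonneg hs.1]
          have : s * ‖v‖ ≤ ‖v‖ := by
            nlinarith [norm_nonneg v, hs.1, hs.2.le]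
          nlinarith [norm_nonneg v, hε.le, mul_le_mul_of_nonneg_right this (norm_nonneg v)]
  have := norm_image_sub_le_of_norm_deriv_le_segment_01' key bound
  have h2 := this
  simp only [hg] at h2
  calc ‖f (x₀ + v) - f x₀ - A v - (1/2:ℝ) • (B v) v‖
      = ‖f (x₀ + (1:ℝ) • v) - (1:ℝ) • A v - ((1:ℝ)^2/2) • (B v) v -
        (f (x₀ + (0:ℝ) • v) - (0:ℝ) • A v - ((0:ℝ)^2/2) • (B v) v)‖ := by
        norm_num [one_smul]
        congr 1
        abel
    _ ≤ ε * ‖v‖ ^ 2 := h2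

set_option maxHeartbeats 1000000 in
private lemma keylim {E F : Type*} [NormedAddCommGroup E] [NormedSpace ℝ E]
    [NormedAddCommGroup F] [NormedSpace ℝ F] (f : E → F) (hf : ContDiff ℝ 2 f) (x₀ d h : E)
    (t : ℕ → ℝ) (u : ℕ → E) (htpos : ∀ k, 0 < t k)
    (ht : Tendsto t atTop (𝓝 0)) (hu : Tendsto u atTop (𝓝 h)) :
    Tendsto (fun k => (2 / (t k)^2) •
        (f (x₀ + t k • d + ((t k)^2/2) • u k) - f x₀ - t k • (fderiv ℝ f x₀ d)))
      atTop (𝓝 (fderiv ℝ f x₀ h + fderiv ℝ (fderiv ℝ f) x₀ d d)) := by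
  set A := fderiv ℝ f x₀
  set B := fderiv ℝ (fderiv ℝ f) x₀
  set v : ℕ → E := fun k => t k • d + ((t k)^2/2) • u k with hv
  set c : ℕ → E := fun k => d + (t k / 2) • u k with hc
  set r : ℕ → F := fun k => f (x₀ + v k) - f x₀ - A (v k) - (1/2 : ℝ) • (B (v k) (v k))
    with hr
  have hsplit : ∀ k, (2 / (t k)^2) • (f (x₀ + v k) - f x₀ - t k • (A d))
      = A (u k) + B (c k) (c k) + (2 / (t k)^2) • r k := by
    intro k
    have htk := (htpos k).ne'
    have hAv : A (v k) = t k • A d + ((t k)^2/2) • A (u k) := by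
      simp [hv, map_add, map_smul]
    have hc' : c k = (t k)⁻¹ • v k := by
      simp only [hc, hv, smul_add, smul_smul]
      congr 1
      · rw [inv_mul_cancel₀ htk, one_smul]
      · congr 1
        field_simp
    have hBc : B (c k) (c k) = ((t k)^2)⁻¹ • (B (v k) (v k)) := by
      rw [hc']
      simp [map_smul, ContinuousLinearMap.smul_apply, smul_smul]
      ring_nf
    have : f (x₀ + v k) - f x₀ - t k • (A d)
        = ((t k)^2/2) • A (u k) + (1/2 : ℝ) • (B (v k) (v k)) + r k := by
      have hrk : r k = f (x₀ + v k) - f x₀ - A (v k) - (1/2 : ℝ) • (B (v k) (v k)) := rfl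
      rw [hrk, hAv]; abel
    rw [this]
    rw [smul_add, smul_add, smul_smul, smul_smul, hBc]
    congr 2
    · rw [div_mul_div_comm]
      rw [show (2:ℝ) * (t k)^2 = (t k)^2 * 2 by ring, div_self]
      · exact one_smul ℝ _
      · positivity
    · congr 1
      field_simp
  have h1 : Tendsto (fun k => A (u k)) atTop (𝓝 (A h)) :=
    (A.continuous.tendsto h).comp hu
  have hcd : Tendsto c atTop (𝓝 d) := by
    have : Tendsto (fun k => (t k / 2) • u k) atTop (𝓝 ((0:ℝ) • h)) :=
      Tendsto.smul (by simpa using ht.div_const 2) hu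
    rw [zero_smul] at this
    simpa using this.const_add d
  have h2 : Tendsto (fun k => B (c k) (c k)) atTop (𝓝 (B d d)) := by
    have hcont : Continuous (fun x : E => B x x) :=
      isBoundedBilinearMap_apply.continuous.comp ((B.continuous).prodMk continuous_id)
    exact (hcont.tendsto d).comp hcd
  have h3 : Tendsto (fun k => (2 / (t k)^2) • r k) atTop (𝓝 0) := by
    rw [NormedAddCommGroup.tendsto_nhds_zero]
    intro ε hε
    -- bound ‖u k‖ and choose M
    have hub : ∀ᶠ k in atTop, ‖u k‖ ≤ ‖h‖ + 1 := by
      have := hu.norm.eventually (eventually_le_nhds (by linarith : ‖h‖ < ‖h‖ + 1))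
      exact this
    set M : ℝ := ‖d‖ + ‖h‖ + 1 with hM
    have hMpos : 0 < M := by positivity
    have hε' : 0 < ε / (2 * M^2 + 1) := by positivity
    obtain ⟨δ, hδpos, hδ⟩ := taylor2 f hf x₀ hε'
    have hvsmall : Tendsto (fun k => ‖v k‖) atTop (𝓝 0) := by
      have : Tendsto v atTop (𝓝 ((0:ℝ) • d + ((0:ℝ)^2/2) • h)) := by
        apply Tendsto.add
        · exact Tendsto.smul ht tendsto_const_nhds
        · exact Tendsto.smul (by simpa using ((ht.pow 2).div_const 2)) hu
      simp only [zero_smul, add_zero, zero_pow, ne_eq, OfNat.ofNat_ne_zero,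
        not_false_eq_true, zero_div] at this
      simpa using this.norm
    have hvδ : ∀ᶠ k in atTop, ‖v k‖ ≤ δ :=
      hvsmall.eventually (eventually_le_nhds hδpos)
    have hts : ∀ᶠ k in atTop, t k ≤ 2 := by
      have := ht.eventually (eventually_le_nhds (by norm_num : (0:ℝ) < 2))
      exact this
    filter_upwards [hub, hvδ, hts] with k hubk hvδk htsk
    have hvM : ‖v k‖ ≤ t k * M := by
      calc ‖v k‖ ≤ ‖t k • d‖ + ‖((t k)^2/2) • u k‖ := norm_add_le _ _
        _ = t k * ‖d‖ + ((t k)^2/2) * ‖u k‖ := by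
            rw [norm_smul, norm_smul, Real.norm_eq_abs, Real.norm_eq_abs,
              abs_of_pos (htpos k), abs_of_pos (div_pos (pow_pos (htpos k) 2) two_pos)]
        _ ≤ t k * ‖d‖ + t k * (‖h‖ + 1) := by
            have h1 : (t k)^2/2 ≤ t k := by nlinarith [htpos k]
            have h2 : ((t k)^2/2) * ‖u k‖ ≤ t k * (‖h‖ + 1) := by
              apply mul_le_mul h1 hubk (norm_nonneg _) (htpos k).le
            linarith
        _ ≤ t k * M := by rw [hM]; nlinarith [htpos k, norm_nonneg (d:E)]
    have hrk : ‖r k‖ ≤ (ε / (2 * M^2 + 1)) * ‖v k‖^2 := hδ (v k) hvδk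
    have : ‖(2 / (t k)^2) • r k‖ ≤ (2 / (t k)^2) * ((ε / (2 * M^2 + 1)) * (t k * M)^2) := by
      rw [norm_smul, Real.norm_eq_abs, abs_of_pos (div_pos two_pos (pow_pos (htpos k) 2))]
      apply mul_le_mul_of_nonneg_left _ (by positivity)
      calc ‖r k‖ ≤ (ε / (2 * M^2 + 1)) * ‖v k‖^2 := hrk
        _ ≤ (ε / (2 * M^2 + 1)) * (t k * M)^2 := by
            apply mul_le_mul_of_nonneg_left _ hε'.le
            apply pow_le_pow_left₀ (norm_nonneg _) hvM
    have h2M : (0:ℝ) < 2 * M^2 + 1 := by positivity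
    have htk2 : (t k)^2 ≠ 0 := (pow_pos (htpos k) 2).ne'
    calc ‖(2 / (t k)^2) • r k‖ ≤ (2 / (t k)^2) * ((ε / (2 * M^2 + 1)) * (t k * M)^2) := this
      _ = (2 * ε * M^2) / (2 * M^2 + 1) := by
          rw [mul_pow]
          field_simp
          ring
          exact mul_inv_cancel₀ (htpos k).ne'
      _ < ε := by
          rw [div_lt_iff₀ h2M]
          nlinarith [hMpos, hε]
  have := (h1.add h2).add h3
  rw [add_zero] at this
  apply this.congr
  intro k
  rw [← hsplit k]
  simp only [hv, add_assoc]

set_option maxHeartbeats 1000000 in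
theorem second_tangent_preimage_eq_of_subregular {n m : ℕ}
    (P : EuclideanSpace ℝ (Fin n) → EuclideanSpace ℝ (Fin m)) (hP : ContDiff ℝ 2 P)
    (Ω : Set (EuclideanSpace ℝ (Fin m))) (hΩ : IsClosed Ω)
    (x₀ : EuclideanSpace ℝ (Fin n)) (hx₀ : P x₀ ∈ Ω)
    (hsub : ∃ κ > (0 : ℝ), ∃ ε > (0 : ℝ), ∀ x : EuclideanSpace ℝ (Fin n), ‖x - x₀‖ < ε →
      Metric.infDist x {x | P x ∈ Ω} ≤ κ * Metric.infDist (P x) Ω)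
    (d : EuclideanSpace ℝ (Fin n)) (hd : d ∈ bTangent {x | P x ∈ Ω} x₀) :
    bTangent2 {x | P x ∈ Ω} x₀ d =
      {h | fderiv ℝ P x₀ h + fderiv ℝ (fderiv ℝ P) x₀ d d
            ∈ bTangent2 Ω (P x₀) (fderiv ℝ P x₀ d)} := by
  
  classical
  set A := fderiv ℝ P x₀ with hAdef
  set B := fderiv ℝ (fderiv ℝ P) x₀ with hBdef
  set Y : Set (EuclideanSpace ℝ (Fin n)) := {x | P x ∈ Ω} with hYdef
  ext h
  simp only [Set.mem_setOf_eq]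
  constructor
  · rintro ⟨t, hk, htpos, ht, hhk, hmem⟩
    refine ⟨t, fun k => (2/(t k)^2) •
      (P (x₀ + t k • d + ((t k)^2/2) • hk k) - P x₀ - t k • (A d)), htpos, ht,
      keylim P hP x₀ d h t hk htpos ht hhk, fun k => ?_⟩
    have hone : ((t k)^2/2) * (2/(t k)^2) = 1 := by
      have htk : t k ≠ 0 := (htpos k).ne'
      field_simp
    have : P x₀ + t k • (A d) + ((t k)^2/2) • ((2/(t k)^2) •
        (P (x₀ + t k • d + ((t k)^2/2) • hk k) - P x₀ - t k • (A d)))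
        = P (x₀ + t k • d + ((t k)^2/2) • hk k) := by
      rw [smul_smul, hone, one_smul]
      abel
    rw [this]
    exact hmem k
  · rintro ⟨t, w, htpos, ht, hw, hmem⟩
    obtain ⟨κ, hκ, ε, hε, hsubr⟩ := hsub
    set x : ℕ → EuclideanSpace ℝ (Fin n) := fun k => x₀ + t k • d + ((t k)^2/2) • h
      with hxdef
    set e : ℕ → EuclideanSpace ℝ (Fin m) := fun k =>
      (2/(t k)^2) • (P (x k) - P x₀ - t k • (A d)) - w k with hedef
    have he : Tendsto e atTop (𝓝 0) := by
      have hkey := keylim P hP x₀ d h t (fun _ => h) htpos ht tendsto_const_nhds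
      have := hkey.sub hw
      rw [sub_self] at this
      exact this
    have hx0 : Tendsto x atTop (𝓝 x₀) := by
      have h1 : Tendsto (fun k => t k • d) atTop (𝓝 ((0:ℝ) • d)) :=
        Tendsto.smul ht tendsto_const_nhds
      have h2 : Tendsto (fun k => ((t k)^2/2) • h) atTop (𝓝 (((0:ℝ)^2/2) • h)) :=
        Tendsto.smul (by simpa using (ht.pow 2).div_const 2) tendsto_const_nhds
      have := (tendsto_const_nhds (x := x₀) (f := atTop)).add h1 |>.add h2
      simpa using this
    have hxball : ∀ᶠ k in atTop, ‖x k - x₀‖ < ε := by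
      have := hx0 (Metric.ball_mem_nhds x₀ hε)
      filter_upwards [this] with k hkk
      simp only [mem_preimage, Metric.mem_ball, dist_eq_norm] at hkk
      exact hkk
    obtain ⟨N, hN⟩ := eventually_atTop.1 hxball
    have hYne : Y.Nonempty := ⟨x₀, hx₀⟩
    have hPdist : ∀ k, Metric.infDist (P (x k)) Ω ≤ ((t k)^2/2) * ‖e k‖ := by
      intro k
      have hz : P x₀ + t k • (A d) + ((t k)^2/2) • w k ∈ Ω := hmem k
      have htk : t k ≠ 0 := (htpos k).ne'
      have heq : P (x k) - (P x₀ + t k • (A d) + ((t k)^2/2) • w k)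
          = ((t k)^2/2) • e k := by
        rw [hedef]
        simp only
        rw [smul_sub, smul_smul,
          show ((t k)^2/2) * (2/(t k)^2) = 1 by field_simp, one_smul]
        abel
      calc Metric.infDist (P (x k)) Ω
          ≤ dist (P (x k)) (P x₀ + t k • (A d) + ((t k)^2/2) • w k) :=
            Metric.infDist_le_dist_of_mem hz
        _ = ((t k)^2/2) * ‖e k‖ := by
            rw [dist_eq_norm, heq, norm_smul, Real.norm_eq_abs,
              abs_of_pos (div_pos (pow_pos (htpos k) 2) two_pos)]
    have hYdist : ∀ k, ∃ y ∈ Y, dist (x (k + N)) y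
        < κ * (((t (k+N))^2/2) * ‖e (k+N)‖) + (t (k+N))^3 := by
      intro k
      have h1 : Metric.infDist (x (k+N)) Y ≤ κ * (((t (k+N))^2/2) * ‖e (k+N)‖) := by
        calc Metric.infDist (x (k+N)) Y ≤ κ * Metric.infDist (P (x (k+N))) Ω :=
              hsubr _ (hN (k+N) (Nat.le_add_left N k))
          _ ≤ κ * (((t (k+N))^2/2) * ‖e (k+N)‖) :=
              mul_le_mul_of_nonneg_left (hPdist (k+N)) hκ.le
      have h2 : Metric.infDist (x (k+N)) Y
          < κ * (((t (k+N))^2/2) * ‖e (k+N)‖) + (t (k+N))^3 :=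
        lt_of_le_of_lt h1 (by nlinarith [pow_pos (htpos (k+N)) 3])
      exact (Metric.infDist_lt_iff hYne).1 h2
    choose y hyY hydist using hYdist
    refine ⟨fun k => t (k+N), fun k => h + (2/(t (k+N))^2) • (y k - x (k+N)),
      fun k => htpos _, ht.comp (tendsto_add_atTop_nat N), ?_, fun k => ?_⟩
    · have hb : ∀ k, ‖(2/(t (k+N))^2) • (y k - x (k+N))‖
          ≤ κ * ‖e (k+N)‖ + 2 * t (k+N) := by
        intro k
        have htk : t (k+N) ≠ 0 := (htpos _).ne'
        rw [norm_smul, Real.norm_eq_abs,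
          abs_of_pos (div_pos two_pos (pow_pos (htpos _) 2))]
        have hd : ‖y k - x (k+N)‖ = dist (x (k+N)) (y k) := by
          rw [dist_eq_norm, norm_sub_rev]
        rw [hd]
        calc (2/(t (k+N))^2) * dist (x (k+N)) (y k)
            ≤ (2/(t (k+N))^2) * (κ * (((t (k+N))^2/2) * ‖e (k+N)‖) + (t (k+N))^3) := by
              apply mul_le_mul_of_nonneg_left (hydist k).le
              positivity
          _ = κ * ‖e (k+N)‖ + 2 * t (k+N) := by
              field_simp
      have hg : Tendsto (fun k => κ * ‖e (k+N)‖ + 2 * t (k+N)) atTop (𝓝 0) := by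
        have h1 : Tendsto (fun k => ‖e (k+N)‖) atTop (𝓝 0) := by
          simpa using (he.comp (tendsto_add_atTop_nat N)).norm
        have h2 : Tendsto (fun k => t (k+N)) atTop (𝓝 0) :=
          ht.comp (tendsto_add_atTop_nat N)
        have := (h1.const_mul κ).add (h2.const_mul 2)
        simpa using this
      have hz : Tendsto (fun k => (2/(t (k+N))^2) • (y k - x (k+N))) atTop (𝓝 0) :=
        squeeze_zero_norm hb hg
      have := (tendsto_const_nhds (x := h) (f := atTop)).add hz
      simpa using this
    · have hone : ((t (k+N))^2/2) * (2/(t (k+N))^2) = 1 := by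
        have htk : t (k+N) ≠ 0 := (htpos _).ne'
        field_simp
      have : x₀ + t (k+N) • d + ((t (k+N))^2/2) •
          (h + (2/(t (k+N))^2) • (y k - x (k+N))) = y k := by
        rw [smul_add, smul_smul, hone, one_smul, hxdef]
        simp only
        abel
      rw [this]
      exact hyY k
end
end

section
/- Let x̄ ∈ X be a locally optimal solution of min f(x) subject to x ∈ X (X ⊆ ℝⁿ closed, f twice continuously differentiable). Then for every d ∈ T_X(x̄) with ∇f(x̄)·d ≤ 0 and every h ∈ T²_X(x̄; d), one has ∇f(x̄)·h + dᵀ∇²f(x̄)d ≥ 0. -/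
open Filter Topology Set
open scoped Pointwise RealInnerProductSpace

noncomputable section

variable {V : Type*} [NormedAddCommGroup V] [InnerProductSpace ℝ V]

section Aux
open Asymptotics
set_option maxHeartbeats 1000000

lemma taylor2_aux {E : Type*} [NormedAddCommGroup E] [NormedSpace ℝ E]
    (f : E → ℝ) (hf : ContDiff ℝ 2 f) (x₀ : E) :
    (fun x => f x - f x₀ - fderiv ℝ f x₀ (x - x₀)
        - (1/2 : ℝ) * fderiv ℝ (fderiv ℝ f) x₀ (x - x₀) (x - x₀)) =o[𝓝 x₀]
      fun x => ‖x - x₀‖ ^ 2 := by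
  set B := fderiv ℝ (fderiv ℝ f) x₀ with hB
  have hsymm : ∀ v w, B v w = B w v := hf.contDiffAt.isSymmSndFDerivAt (by simp)
  have hd1 : Differentiable ℝ f := hf.differentiable (by norm_num)
  have hd2 : Differentiable ℝ (fderiv ℝ f) :=
    (hf.fderiv_right (m := 1) le_rfl).differentiable (by norm_num)
  set φ : E → ℝ := fun x => f x - fderiv ℝ f x₀ (x - x₀) - (1/2 : ℝ) * B (x - x₀) (x - x₀)
    with hφdef
  set φ' : E → (E →L[ℝ] ℝ) := fun y => fderiv ℝ f y - fderiv ℝ f x₀ - B (y - x₀) with hφ'def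
  have hφ : ∀ y, HasFDerivAt φ (φ' y) y := by
    intro y
    have hsub : HasFDerivAt (fun x : E => x - x₀) (ContinuousLinearMap.id ℝ E) y :=
      (hasFDerivAt_id y).sub_const x₀
    have h1 : HasFDerivAt (fun x => fderiv ℝ f x₀ (x - x₀)) (fderiv ℝ f x₀) y := by
      have h0 := (fderiv ℝ f x₀).hasFDerivAt.comp y hsub
      rw [ContinuousLinearMap.comp_id] at h0
      exact h0
    have h2 := B.hasFDerivAt_of_bilinear hsub hsub
    have h3 := ((hd1 y).hasFDerivAt.sub h1).sub (h2.const_mul (1/2 : ℝ))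
    convert h3 using 1
    · rfl
    · rfl
    · rfl
    ext v
    simp only [hφ'def, ContinuousLinearMap.coe_sub', Pi.sub_apply,
      ContinuousLinearMap.smul_apply, ContinuousLinearMap.add_apply,
      ContinuousLinearMap.precompR_apply, ContinuousLinearMap.precompL_apply,
      ContinuousLinearMap.coe_id', id_eq, smul_eq_mul, ContinuousLinearMap.compL_apply,
      ContinuousLinearMap.coe_comp', Function.comp_apply]
    rw [hsymm v (y - x₀)]
    ring
  have hBder : HasFDerivAt (fderiv ℝ f) B x₀ := (hd2 x₀).hasFDerivAt
  rw [isLittleO_iff]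
  intro ε εpos
  have hev : ∀ᶠ y in 𝓝 x₀, ‖φ' y‖ ≤ ε * ‖y - x₀‖ := by
    have := isLittleO_iff.1 hBder.isLittleO εpos
    filter_upwards [this] with y hy
    simpa [hφ'def, sub_sub] using hy
  rcases Metric.eventually_nhds_iff.1 hev with ⟨δ, δpos, hδ⟩
  filter_upwards [Metric.ball_mem_nhds x₀ δpos] with x hx
  have hxd : ‖x - x₀‖ < δ := by simpa [dist_eq_norm] using hx
  have hseg : ∀ y ∈ segment ℝ x₀ x, ‖φ' y‖ ≤ ε * ‖x - x₀‖ := by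
    intro y hy
    rw [segment_eq_image'] at hy
    rcases hy with ⟨s, ⟨hs0, hs1⟩, rfl⟩
    have hyx : ‖x₀ + s • (x - x₀) - x₀‖ ≤ ‖x - x₀‖ := by
      simp only [add_sub_cancel_left, norm_smul, Real.norm_eq_abs, abs_of_nonneg hs0]
      nlinarith [norm_nonneg (x - x₀)]
    have := hδ (y := x₀ + s • (x - x₀)) (by
      rw [dist_eq_norm]; exact lt_of_le_of_lt hyx hxd)
    exact this.trans (by nlinarith [norm_nonneg (x - x₀), εpos.le])
  have hmvt := (convex_segment x₀ x).norm_image_sub_le_of_norm_hasFDerivWithin_le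
    (fun y hy => (hφ y).hasFDerivWithinAt) hseg (left_mem_segment ℝ x₀ x)
    (right_mem_segment ℝ x₀ x)
  have hφ0 : φ x₀ = f x₀ := by simp [hφdef]
  calc ‖f x - f x₀ - fderiv ℝ f x₀ (x - x₀) - (1/2 : ℝ) * B (x - x₀) (x - x₀)‖
      = ‖φ x - φ x₀‖ := by rw [hφ0]; congr 1; simp [hφdef]; ring
    _ ≤ ε * ‖x - x₀‖ * ‖x - x₀‖ := hmvt
    _ = ε * ‖‖x - x₀‖ ^ 2‖ := by
        rw [Real.norm_of_nonneg (by positivity)]; ring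

end Aux

set_option maxHeartbeats 1000000 in
theorem second_order_necessary {n : ℕ}
    (f : EuclideanSpace ℝ (Fin n) → ℝ) (hf : ContDiff ℝ 2 f)
    (X : Set (EuclideanSpace ℝ (Fin n))) (hX : IsClosed X)
    (x₀ : EuclideanSpace ℝ (Fin n)) (hx₀ : x₀ ∈ X)
    (hopt : ∃ ε > (0 : ℝ), ∀ x ∈ X, dist x x₀ < ε → f x₀ ≤ f x) :
    ∀ d ∈ bTangent X x₀, fderiv ℝ f x₀ d ≤ 0 →
      ∀ h ∈ bTangent2 X x₀ d,
        0 ≤ fderiv ℝ f x₀ h + fderiv ℝ (fderiv ℝ f) x₀ d d := by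
  intro d _hd hLd h hh
  obtain ⟨t, hk, htpos, ht0, hhk, hmem⟩ := hh
  set L : EuclideanSpace ℝ (Fin n) →L[ℝ] ℝ := fderiv ℝ f x₀ with hLdef
  set B := fderiv ℝ (fderiv ℝ f) x₀ with hBdef
  set w : ℕ → EuclideanSpace ℝ (Fin n) := fun k => d + (t k / 2) • hk k with hwdef
  set x : ℕ → EuclideanSpace ℝ (Fin n) := fun k => x₀ + t k • w k with hxdef
  have hxmem : ∀ k, x k ∈ X := by
    intro k
    have : x k = x₀ + t k • d + ((t k) ^ 2 / 2) • hk k := by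
      simp only [hxdef, hwdef]; module
    rw [this]; exact hmem k
  -- limits
  have hw : Tendsto w atTop (𝓝 d) := by
    have h1 : Tendsto (fun k => (t k / 2) • hk k) atTop (𝓝 (((0:ℝ)/2) • h)) :=
      (ht0.div_const 2).smul hhk
    rw [show (0:ℝ)/2 = 0 by norm_num, zero_smul] at h1
    simpa using tendsto_const_nhds.add h1
  have hv : Tendsto (fun k => t k • w k) atTop (𝓝 0) := by
    have := ht0.smul hw
    rwa [zero_smul] at this
  have hx : Tendsto x atTop (𝓝 x₀) := by
    have h1 : Tendsto (fun k => x₀ + t k • w k) atTop (𝓝 (x₀ + 0)) :=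
      tendsto_const_nhds.add hv
    rw [add_zero] at h1
    exact h1
  -- eventual optimality
  have hfge : ∀ᶠ k in atTop, f x₀ ≤ f (x k) := by
    obtain ⟨ε, εpos, hop⟩ := hopt
    filter_upwards [hx (Metric.ball_mem_nhds x₀ εpos)] with k hk'
    exact hop _ (hxmem k) hk'
  -- remainder
  set r : ℕ → ℝ := fun k => f (x k) - f x₀ - L (x k - x₀) - (1/2 : ℝ) * B (x k - x₀) (x k - x₀)
    with hrdef
  have hr : Tendsto (fun k => r k / (t k) ^ 2) atTop (𝓝 0) := by
    have h1 : (fun k => r k) =o[atTop] fun k => ‖x k - x₀‖ ^ 2 :=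
      (taylor2_aux f hf x₀).comp_tendsto hx
    have h2 : (fun k => ‖x k - x₀‖ ^ 2) =O[atTop] fun k => (t k) ^ 2 := by
      rw [Asymptotics.isBigO_iff]
      refine ⟨(‖d‖ + 1) ^ 2, ?_⟩
      have hwb : ∀ᶠ k in atTop, ‖w k‖ ≤ ‖d‖ + 1 :=
        hw.norm.eventually_le_const (by linarith [norm_nonneg d])
      filter_upwards [hwb] with k hk'
      have hxv : x k - x₀ = t k • w k := by simp [hxdef]
      have hn : ‖x k - x₀‖ = t k * ‖w k‖ := by
        rw [hxv, norm_smul, Real.norm_eq_abs, abs_of_pos (htpos k)]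
      rw [Real.norm_of_nonneg (by positivity : (0:ℝ) ≤ ‖x k - x₀‖ ^ 2),
        Real.norm_of_nonneg (sq_nonneg (t k)), hn]
      nlinarith [norm_nonneg (w k), norm_nonneg d, (htpos k).le, sq_nonneg (t k),
        mul_le_mul hk' hk' (norm_nonneg (w k)) (by linarith [norm_nonneg d] : (0:ℝ) ≤ ‖d‖ + 1),
        mul_nonneg (htpos k).le (htpos k).le]
    exact (h1.trans_isBigO h2).tendsto_div_nhds_zero
  -- the quotient sequence
  set A : ℕ → ℝ := fun k => L (hk k) + B (w k) (w k) + 2 * (r k / (t k) ^ 2) with hAdef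
  have hA : Tendsto A atTop (𝓝 (L h + B d d)) := by
    have h1 : Tendsto (fun k => L (hk k)) atTop (𝓝 (L h)) :=
      (L.continuous.tendsto h).comp hhk
    have h2 : Tendsto (fun k => B (w k) (w k)) atTop (𝓝 (B d d)) := by
      have hc : Continuous fun p : EuclideanSpace ℝ (Fin n) × EuclideanSpace ℝ (Fin n) =>
          B p.1 p.2 := B.continuous₂
      exact (hc.tendsto (d, d)).comp (hw.prodMk_nhds hw)
    have h3 : Tendsto (fun k => 2 * (r k / (t k) ^ 2)) atTop (𝓝 (2 * 0)) := hr.const_mul 2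
    rw [mul_zero] at h3
    simpa using (h1.add h2).add h3
  have hA0 : ∀ᶠ k in atTop, 0 ≤ A k := by
    filter_upwards [hfge] with k hk'
    have htk : t k ≠ 0 := (htpos k).ne'
    have hxv : x k - x₀ = t k • w k := by simp [hxdef]
    have e1 : L (x k - x₀) = t k * L (w k) := by rw [hxv, map_smul]; rfl
    have e2 : B (x k - x₀) (x k - x₀) = t k * (t k * B (w k) (w k)) := by
      rw [hxv, map_smul]
      simp [smul_eq_mul]
    have e3 : L (w k) = L d + t k / 2 * L (hk k) := by
      simp [hwdef, map_add, map_smul, smul_eq_mul]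
    have hAeq : A k = (f (x k) - f x₀ - t k * L d) / ((t k) ^ 2 / 2) := by
      rw [hAdef]
      simp only [hrdef, e1, e2, e3]
      field_simp
      ring
    rw [hAeq]
    apply div_nonneg _ (by positivity)
    have : 0 ≤ - (t k * L d) := by
      have := mul_nonneg (htpos k).le (neg_nonneg.2 hLd)
      linarith [this]
    linarith
  exact ge_of_tendsto hA hA0
end
end

section
/- Let x̄ be an S-stationary point of the disjunctive program min f(x) s.t. F(x) ∈ D = ⋃_{i=1}^r D_i (D_i ⊆ ℝᵐ polyhedral, f, F twice continuously differentiable) such that for every nonzero critical direction d ∈ C_X(x̄) there exists a multiplier λ ∈ S(x̄) with dᵀ∇²_{xx}L(x̄,λ)d > 0. Then there exist ε > 0 and C > 0 such that f(x) ≥ f(x̄) + C‖x − x̄‖² for all feasible x with ‖x − x̄‖ ≤ ε; in particular, x̄ is a strict local minimizer. -/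
open Filter Topology Set
open scoped Pointwise RealInnerProductSpace

noncomputable section

variable {V : Type*} [NormedAddCommGroup V] [InnerProductSpace ℝ V]

set_option maxHeartbeats 1000000 in
lemma IsPolyhedral.convex {Q : Set V} (h : IsPolyhedral Q) : Convex ℝ Q := by
  obtain ⟨k, a, b, rfl⟩ := h
  intro x hx y hy s t hs ht hst i
  have hx' := hx i
  have hy' := hy i
  rw [inner_add_right, real_inner_smul_right, real_inner_smul_right]
  calc s * ⟪a i, x⟫ + t * ⟪a i, y⟫ ≤ s * b i + t * b i :=
        add_le_add (mul_le_mul_of_nonneg_left hx' hs) (mul_le_mul_of_nonneg_left hy' ht)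
    _ = b i := by rw [← add_mul, hst, one_mul]

lemma IsPolyhedral.isClosed {Q : Set V} (h : IsPolyhedral Q) : IsClosed Q := by
  obtain ⟨k, a, b, rfl⟩ := h
  have : {x : V | ∀ i, ⟪a i, x⟫ ≤ b i} = ⋂ i, {x | ⟪a i, x⟫ ≤ b i} := by
    ext x; simp [Set.mem_iInter]
  rw [this]
  exact isClosed_iInter fun i =>
    isClosed_le (Continuous.inner continuous_const continuous_id) continuous_const

lemma mem_bTangent_of_convex {A : Set V} (hA : Convex ℝ A) {x y : V}
    (hx : x ∈ A) (hy : y ∈ A) : y - x ∈ bTangent A x := by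
  refine ⟨fun j => 1/((j:ℝ)+1), fun _ => y - x, fun j => by positivity,
    tendsto_one_div_add_atTop_nhds_zero_nat, tendsto_const_nhds, fun j => ?_⟩
  have h0 : (0:ℝ) ≤ 1/((j:ℝ)+1) := by positivity
  have h1 : 1/((j:ℝ)+1) ≤ 1 := by
    rw [div_le_one (by positivity)]; linarith [Nat.cast_nonneg (α := ℝ) j]
  have := hA hx hy (by linarith : (0:ℝ) ≤ 1 - 1/((j:ℝ)+1)) h0 (by ring)
  convert this using 1
  rw [sub_smul, smul_sub, one_smul]
  abel

/-- Second-order Taylor estimate for a `C^2` real-valued function. -/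
lemma quad_approx {E : Type*} [NormedAddCommGroup E] [NormedSpace ℝ E]
    (g : E → ℝ) (hg : ContDiff ℝ 2 g) (x₀ : E) {η : ℝ} (hη : 0 < η) :
    ∃ r > (0:ℝ), ∀ x, ‖x - x₀‖ < r →
      |g x - g x₀ - fderiv ℝ g x₀ (x - x₀)
        - (1/2) * fderiv ℝ (fderiv ℝ g) x₀ (x - x₀) (x - x₀)| ≤ η * ‖x - x₀‖ ^ 2 := by
  set G := fderiv ℝ g with hGdef
  have hG : ContDiff ℝ 1 G := hg.fderiv_right (by norm_num)
  set B := fderiv ℝ G x₀ with hBdef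
  have hgdiff : Differentiable ℝ g := hg.differentiable (by norm_num)
  have hGdiff : Differentiable ℝ G := hG.differentiable (by norm_num)
  have hsymm : ∀ v w, B v w = B w v :=
    second_derivative_symmetric (fun y => (hgdiff y).hasFDerivAt) (hGdiff x₀).hasFDerivAt
  have hcont : ContinuousAt (fderiv ℝ G) x₀ :=
    ((hG.fderiv_right (m := 0) (by norm_num)).continuous).continuousAt
  obtain ⟨r, hr, hball⟩ : ∃ r > (0:ℝ), ∀ z, ‖z - x₀‖ < r → ‖fderiv ℝ G z - B‖ ≤ η := by
    obtain ⟨δ, hδ, hd⟩ := (Metric.continuousAt_iff (f := fderiv ℝ G)).mp hcont η hη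
    refine ⟨δ, hδ, fun z hz => ?_⟩
    have := hd (show dist z x₀ < δ by simpa [dist_eq_norm] using hz)
    exact (dist_eq_norm (fderiv ℝ G z) B).symm.le.trans this.le
  have hMVT1 : ∀ z, ‖z - x₀‖ < r → ‖G z - G x₀ - B (z - x₀)‖ ≤ η * ‖z - x₀‖ := by
    intro z hz
    refine (convex_ball x₀ r).norm_image_sub_le_of_norm_hasFDerivWithin_le'
      (fun y hy => (hGdiff y).hasFDerivAt.hasFDerivWithinAt)
      (fun y hy => hball y (by simpa [Metric.mem_ball, dist_eq_norm] using hy)) ?_ ?_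
    · simpa [Metric.mem_ball] using hr
    · simpa [Metric.mem_ball, dist_eq_norm] using hz
  refine ⟨r, hr, fun x hx => ?_⟩
  rcases eq_or_ne x x₀ with rfl | hne
  · simp
  set s := ‖x - x₀‖ with hsdef
  have hs : 0 < s := by simpa [hsdef] using sub_ne_zero_of_ne hne
  have hh : ∀ z, HasFDerivAt (fun z => g z - (1/2) * B (z - x₀) (z - x₀)) (G z - B (z - x₀)) z := by
    intro z
    have h1 : HasFDerivAt (fun z => B (z - x₀) (z - x₀))
        (B.precompR E (z - x₀) (ContinuousLinearMap.id ℝ E)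
          + B.precompL E (ContinuousLinearMap.id ℝ E) (z - x₀)) z :=
      B.hasFDerivAt_of_bilinear ((hasFDerivAt_id z).sub_const x₀) ((hasFDerivAt_id z).sub_const x₀)
    have h2 := h1.const_mul (1/2 : ℝ)
    have h3 := (hgdiff z).hasFDerivAt.sub h2
    refine h3.congr_fderiv ?_
    ext v
    simp only [ContinuousLinearMap.coe_sub', Pi.sub_apply, ContinuousLinearMap.smul_apply,
      ContinuousLinearMap.add_apply, ContinuousLinearMap.precompR, ContinuousLinearMap.precompL,
      ContinuousLinearMap.comp_apply, ContinuousLinearMap.flip_apply,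
      ContinuousLinearMap.compL_apply, ContinuousLinearMap.coe_id', id_eq, smul_eq_mul]
    rw [hsymm v (z - x₀)]
    ring
  have hbound : ∀ z ∈ Metric.closedBall x₀ s, ‖(G z - B (z - x₀)) - G x₀‖ ≤ η * s := by
    intro z hz
    have hzs : ‖z - x₀‖ ≤ s := by simpa [Metric.mem_closedBall, dist_eq_norm] using hz
    have hzr : ‖z - x₀‖ < r := lt_of_le_of_lt hzs hx
    calc ‖(G z - B (z - x₀)) - G x₀‖ = ‖G z - G x₀ - B (z - x₀)‖ := by rw [sub_right_comm]
      _ ≤ η * ‖z - x₀‖ := hMVT1 z hzr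
      _ ≤ η * s := by nlinarith
  have hMVT2 := (convex_closedBall x₀ s).norm_image_sub_le_of_norm_hasFDerivWithin_le'
    (f := fun z => g z - (1/2) * B (z - x₀) (z - x₀)) (f' := fun z => G z - B (z - x₀))
    (φ := G x₀) (fun z hz => (hh z).hasFDerivWithinAt) hbound
    (Metric.mem_closedBall_self hs.le)
    (show x ∈ Metric.closedBall x₀ s by simp [Metric.mem_closedBall, dist_eq_norm, hsdef])
  have key : ‖g x - (1/2) * B (x - x₀) (x - x₀) - (g x₀ - (1/2) * B (x₀ - x₀) (x₀ - x₀))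
      - G x₀ (x - x₀)‖ ≤ η * s * s := hMVT2
  rw [Real.norm_eq_abs] at key
  have heq : g x - (1/2) * B (x - x₀) (x - x₀) - (g x₀ - (1/2) * B (x₀ - x₀) (x₀ - x₀))
      - G x₀ (x - x₀) = g x - g x₀ - G x₀ (x - x₀) - (1/2) * B (x - x₀) (x - x₀) := by
    simp only [sub_self, map_zero, ContinuousLinearMap.zero_apply, mul_zero]
    ring
  rw [heq] at key
  calc |g x - g x₀ - G x₀ (x - x₀) - (1/2) * B (x - x₀) (x - x₀)| ≤ η * s * s := key
    _ = η * s ^ 2 := by ring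

set_option maxHeartbeats 1000000 in
theorem mpdc_second_order_sufficient {n m r : ℕ}
    (f : EuclideanSpace ℝ (Fin n) → ℝ) (hf : ContDiff ℝ 2 f)
    (F : EuclideanSpace ℝ (Fin n) → EuclideanSpace ℝ (Fin m)) (hF : ContDiff ℝ 2 F)
    (D : Fin r → Set (EuclideanSpace ℝ (Fin m))) (hD : ∀ i, IsPolyhedral (D i))
    (x₀ : EuclideanSpace ℝ (Fin n)) (hfeas : F x₀ ∈ ⋃ i, D i)
    (hstat : ∃ lam : EuclideanSpace ℝ (Fin m),
        lam ∈ (⋂ i ∈ {j | F x₀ ∈ D j}, frechetNormal (D i) (F x₀)) ∧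
        ∀ v, fderiv ℝ f x₀ v + ⟪fderiv ℝ F x₀ v, lam⟫ = 0)
    (hsosc : ∀ d : EuclideanSpace ℝ (Fin n), d ≠ 0 →
        fderiv ℝ F x₀ d ∈ bTangent (⋃ i, D i) (F x₀) → fderiv ℝ f x₀ d ≤ 0 →
        ∃ lam : EuclideanSpace ℝ (Fin m),
          lam ∈ (⋂ i ∈ {j | F x₀ ∈ D j}, frechetNormal (D i) (F x₀)) ∧
          (∀ v, fderiv ℝ f x₀ v + ⟪fderiv ℝ F x₀ v, lam⟫ = 0) ∧
          0 < fderiv ℝ (fderiv ℝ (fun x => f x + ⟪F x, lam⟫)) x₀ d d) :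
    ∃ ε > (0 : ℝ), ∃ C > (0 : ℝ), ∀ x : EuclideanSpace ℝ (Fin n),
      F x ∈ ⋃ i, D i → dist x x₀ ≤ ε → f x₀ + C * ‖x - x₀‖ ^ 2 ≤ f x := by
  by_contra hcon
  push_neg at hcon
  have H : ∀ k : ℕ, ∃ x, F x ∈ ⋃ i, D i ∧ dist x x₀ ≤ 1/((k:ℝ)+1) ∧
      f x < f x₀ + (1/((k:ℝ)+1)) * ‖x - x₀‖^2 :=
    fun k => hcon (1/((k:ℝ)+1)) (by positivity) (1/((k:ℝ)+1)) (by positivity)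
  choose x hx1 hx2 hx3 using H
  have hxne : ∀ k, x k ≠ x₀ := by
    intro k h
    have := hx3 k
    rw [h] at this
    simp at this
  have ht : ∀ k, 0 < ‖x k - x₀‖ := fun k => norm_pos_iff.mpr (sub_ne_zero_of_ne (hxne k))
  have hdist0 : Tendsto (fun k => dist (x k) x₀) atTop (𝓝 0) :=
    squeeze_zero (fun k => dist_nonneg) hx2 tendsto_one_div_add_atTop_nhds_zero_nat
  have hxt : Tendsto x atTop (𝓝 x₀) := by
    rwa [tendsto_iff_dist_tendsto_zero]
  have hdd : ∀ k, ‖x k - x₀‖⁻¹ • (x k - x₀) ∈ Metric.sphere (0 : EuclideanSpace ℝ (Fin n)) 1 := by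
    intro k
    simp [norm_smul, abs_of_pos (ht k), inv_mul_cancel₀ (ht k).ne']
  obtain ⟨d, hdmem, φ, hφ, hdt⟩ :=
    (isCompact_sphere (0 : EuclideanSpace ℝ (Fin n)) 1).tendsto_subseq hdd
  have hdnorm : ‖d‖ = 1 := by simpa using hdmem
  have hdne : d ≠ 0 := fun h => by simp [h] at hdnorm
  -- abbreviations for the subsequence
  have hs0 : ∀ k, 0 < ‖x (φ k) - x₀‖ := fun k => ht (φ k)
  have hyt : Tendsto (fun k => x (φ k)) atTop (𝓝 x₀) := hxt.comp hφ.tendsto_atTop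
  have hst0 : Tendsto (fun k => ‖x (φ k) - x₀‖) atTop (𝓝 0) := by
    have : Tendsto (fun k => ‖x k - x₀‖) atTop (𝓝 0) := by
      simpa [dist_eq_norm] using hdist0
    exact this.comp hφ.tendsto_atTop
  have het : Tendsto (fun k => ‖x (φ k) - x₀‖⁻¹ • (x (φ k) - x₀)) atTop (𝓝 d) := hdt
  have hye : ∀ k, x (φ k) - x₀ = ‖x (φ k) - x₀‖ • (‖x (φ k) - x₀‖⁻¹ • (x (φ k) - x₀)) := by
    intro k
    rw [smul_smul, mul_inv_cancel₀ (hs0 k).ne', one_smul]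
  have hfd : HasFDerivAt f (fderiv ℝ f x₀) x₀ :=
    (hf.differentiable (by norm_num) x₀).hasFDerivAt
  have hFd : HasFDerivAt F (fderiv ℝ F x₀) x₀ :=
    (hF.differentiable (by norm_num) x₀).hasFDerivAt
  -- little-o facts along the subsequence
  have hof : Tendsto
      (fun k => (f (x (φ k)) - f x₀ - fderiv ℝ f x₀ (x (φ k) - x₀)) / ‖x (φ k) - x₀‖)
      atTop (𝓝 0) := by
    have h1 := hfd.isLittleO.comp_tendsto hyt
    exact (Asymptotics.isLittleO_norm_right.mpr h1).tendsto_div_nhds_zero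
  have hoF : Tendsto
      (fun k => ‖x (φ k) - x₀‖⁻¹ • (F (x (φ k)) - F x₀ - fderiv ℝ F x₀ (x (φ k) - x₀)))
      atTop (𝓝 0) := by
    rw [tendsto_zero_iff_norm_tendsto_zero]
    have h1 := (hFd.isLittleO.comp_tendsto hyt).norm_norm.tendsto_div_nhds_zero
    refine h1.congr fun k => ?_
    simp only [Function.comp_apply]
    rw [norm_smul, norm_inv, norm_norm, div_eq_inv_mul]
  -- criticality of d
  have hFdir : Tendsto (fun k => ‖x (φ k) - x₀‖⁻¹ • (F (x (φ k)) - F x₀)) atTop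
      (𝓝 (fderiv ℝ F x₀ d)) := by
    have hc : Tendsto (fun k => fderiv ℝ F x₀ (‖x (φ k) - x₀‖⁻¹ • (x (φ k) - x₀))) atTop
        (𝓝 (fderiv ℝ F x₀ d)) := ((fderiv ℝ F x₀).continuous.tendsto d).comp het
    have := hc.add hoF
    rw [add_zero] at this
    refine this.congr fun k => ?_
    rw [map_smul, ← smul_add]
    congr 1
    abel
  have hcrit1 : fderiv ℝ F x₀ d ∈ bTangent (⋃ i, D i) (F x₀) := by
    refine ⟨fun k => ‖x (φ k) - x₀‖, fun k => ‖x (φ k) - x₀‖⁻¹ • (F (x (φ k)) - F x₀),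
      hs0, hst0, hFdir, fun k => ?_⟩
    rw [smul_inv_smul₀ (hs0 k).ne', add_sub_cancel]
    exact hx1 (φ k)
  have hcrit2 : fderiv ℝ f x₀ d ≤ 0 := by
    have hq : Tendsto (fun k => (f (x (φ k)) - f x₀) / ‖x (φ k) - x₀‖) atTop
        (𝓝 (fderiv ℝ f x₀ d)) := by
      have hc : Tendsto (fun k => fderiv ℝ f x₀ (‖x (φ k) - x₀‖⁻¹ • (x (φ k) - x₀))) atTop
          (𝓝 (fderiv ℝ f x₀ d)) := ((fderiv ℝ f x₀).continuous.tendsto d).comp het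
      have := hc.add hof
      rw [add_zero] at this
      refine this.congr fun k => ?_
      rw [map_smul, smul_eq_mul]
      field_simp
      ring
    have hub : ∀ k, (f (x (φ k)) - f x₀) / ‖x (φ k) - x₀‖ ≤
        (1/(((φ k):ℝ)+1)) * ‖x (φ k) - x₀‖ := by
      intro k
      rw [div_le_iff₀ (hs0 k)]
      have := hx3 (φ k)
      nlinarith [this]
    have hub0 : Tendsto (fun k => (1/(((φ k):ℝ)+1)) * ‖x (φ k) - x₀‖) atTop (𝓝 0) := by
      refine squeeze_zero (fun k => by positivity) (fun k => ?_) hst0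
      have h1 : 1/(((φ k):ℝ)+1) ≤ 1 := by
        rw [div_le_one (by positivity)]
        linarith [Nat.cast_nonneg (α := ℝ) (φ k)]
      nlinarith [norm_nonneg (x (φ k) - x₀)]
    exact le_of_tendsto_of_tendsto' hq hub0 hub
  obtain ⟨lam, hlam1, hlam2, hpos⟩ := hsosc d hdne hcrit1 hcrit2
  set L : EuclideanSpace ℝ (Fin n) → ℝ := fun x => f x + ⟪F x, lam⟫ with hLdef
  have hLc : ContDiff ℝ 2 L := hf.add (hF.inner ℝ contDiff_const)
  have hFd2 : HasFDerivAt (fun z => (⟪F z, lam⟫ : ℝ))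
      ((innerSL ℝ lam).comp (fderiv ℝ F x₀)) x₀ := by
    have heq : (fun z => (⟪F z, lam⟫ : ℝ)) = fun z => (innerSL ℝ lam) (F z) := by
      funext z
      simp only [innerSL_apply_apply]
      exact real_inner_comm _ _
    rw [heq]
    exact ((innerSL ℝ lam).hasFDerivAt).comp x₀ hFd
  have hL0 : fderiv ℝ L x₀ = 0 := by
    have hder : HasFDerivAt L (fderiv ℝ f x₀ + (innerSL ℝ lam).comp (fderiv ℝ F x₀)) x₀ :=
      hfd.add hFd2
    rw [hder.fderiv]
    ext v
    have h2 := hlam2 v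
    simp only [ContinuousLinearMap.add_apply, ContinuousLinearMap.comp_apply,
      ContinuousLinearMap.zero_apply, innerSL_apply_apply]
    rw [real_inner_comm]
    exact h2
  have hδ : (0:ℝ) < fderiv ℝ (fderiv ℝ L) x₀ d d / 8 := by
    have : (0:ℝ) < fderiv ℝ (fderiv ℝ L) x₀ d d := hpos
    linarith
  obtain ⟨ρ, hρ, hTay⟩ := quad_approx L hLc x₀ hδ
  set B := fderiv ℝ (fderiv ℝ L) x₀ with hBdef
  have hBe : Tendsto (fun k => B (‖x (φ k) - x₀‖⁻¹ • (x (φ k) - x₀))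
      (‖x (φ k) - x₀‖⁻¹ • (x (φ k) - x₀))) atTop (𝓝 (B d d)) := by
    have hBc : Continuous fun v : EuclideanSpace ℝ (Fin n) => B v v :=
      B.isBoundedBilinearMap.continuous.comp (continuous_id.prodMk continuous_id)
    exact (hBc.tendsto d).comp het
  have ev1 : ∀ᶠ k in atTop, ‖x (φ k) - x₀‖ < ρ := hst0.eventually (eventually_lt_nhds hρ)
  have ev2 : ∀ᶠ k in atTop, B d d * 3/4 < B (‖x (φ k) - x₀‖⁻¹ • (x (φ k) - x₀))
      (‖x (φ k) - x₀‖⁻¹ • (x (φ k) - x₀)) :=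
    hBe.eventually (eventually_gt_nhds (by linarith [hpos]))
  have ev3 : ∀ᶠ k in atTop, 1/(((φ k):ℝ)+1) < B d d / 8 := by
    have hc : Tendsto (fun k => 1/(((φ k):ℝ)+1)) atTop (𝓝 0) :=
      tendsto_one_div_add_atTop_nhds_zero_nat.comp hφ.tendsto_atTop
    exact hc.eventually (eventually_lt_nhds hδ)
  have ev4 : ∀ᶠ k in atTop, ∀ i, F x₀ ∉ D i → F (x (φ k)) ∉ D i := by
    rw [eventually_all]
    intro i
    by_cases hi : F x₀ ∈ D i
    · exact Eventually.of_forall fun k h => absurd hi h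
    · have hop : IsOpen (D i)ᶜ := (hD i).isClosed.isOpen_compl
      have hFy : Tendsto (fun k => F (x (φ k))) atTop (𝓝 (F x₀)) :=
        (hF.continuous.tendsto x₀).comp hyt
      exact (hFy.eventually (hop.mem_nhds hi)).mono fun k hk _ => hk
  obtain ⟨k, h1, h2, h3, h4⟩ := (ev1.and (ev2.and (ev3.and ev4))).exists
  obtain ⟨i, hiF⟩ : ∃ i, F (x (φ k)) ∈ D i := by
    simpa [Set.mem_iUnion] using hx1 (φ k)
  have hiI : F x₀ ∈ D i := by
    by_contra h
    exact h4 i h hiF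
  have hlam1' : lam ∈ frechetNormal (D i) (F x₀) := by
    rw [Set.mem_iInter₂] at hlam1
    exact hlam1 i hiI
  have hinner : ⟪F (x (φ k)) - F x₀, lam⟫ ≤ 0 :=
    hlam1' _ (mem_bTangent_of_convex (hD i).convex hiI hiF)
  have hTk := hTay (x (φ k)) h1
  rw [hL0] at hTk
  simp only [ContinuousLinearMap.zero_apply, sub_zero] at hTk
  have hquad : B (x (φ k) - x₀) (x (φ k) - x₀)
      = ‖x (φ k) - x₀‖^2 * B (‖x (φ k) - x₀‖⁻¹ • (x (φ k) - x₀))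
          (‖x (φ k) - x₀‖⁻¹ • (x (φ k) - x₀)) := by
    conv_lhs => rw [hye k]
    simp only [map_smul, ContinuousLinearMap.smul_apply, smul_eq_mul]
    field_simp [(hs0 k).ne']
  rw [hquad] at hTk
  rw [abs_le] at hTk
  have hQ : 0 < ‖x (φ k) - x₀‖^2 := pow_pos (hs0 k) 2
  have hLle : L (x (φ k)) - L x₀ ≤ f (x (φ k)) - f x₀ := by
    have hsub : ⟪F (x (φ k)), lam⟫ - ⟪F x₀, lam⟫ = ⟪F (x (φ k)) - F x₀, lam⟫ :=
      (inner_sub_left _ _ _).symm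
    simp only [hLdef]
    linarith [hinner, hsub]
  have hup : f (x (φ k)) - f x₀ < (1/(((φ k):ℝ)+1)) * ‖x (φ k) - x₀‖^2 := by
    linarith [hx3 (φ k)]
  have hA : ‖x (φ k) - x₀‖ ^ 2 * (1 / ((((φ k) : ℕ) : ℝ) + 1)) <
      ‖x (φ k) - x₀‖ ^ 2 * ((B d) d / 8) := mul_lt_mul_of_pos_left h3 hQ
  have hB : ‖x (φ k) - x₀‖ ^ 2 * ((B d) d * 3 / 4) < ‖x (φ k) - x₀‖ ^ 2 *
      ((B (‖x (φ k) - x₀‖⁻¹ • (x (φ k) - x₀))) (‖x (φ k) - x₀‖⁻¹ • (x (φ k) - x₀))) :=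
    mul_lt_mul_of_pos_left h2 hQ
  have hC : 0 < ‖x (φ k) - x₀‖ ^ 2 * (B d) d := mul_pos hQ hpos
  have hE : 1/2 * (‖x (φ k) - x₀‖ ^ 2 *
        (B (‖x (φ k) - x₀‖⁻¹ • (x (φ k) - x₀))) (‖x (φ k) - x₀‖⁻¹ • (x (φ k) - x₀)))
      - (B d) d / 8 * ‖x (φ k) - x₀‖ ^ 2 ≤ f (x (φ k)) - f x₀ := by
    have t2 : -((B d) d / 8 * ‖x (φ k) - x₀‖ ^ 2) ≤ L (x (φ k)) - L x₀ -
        1 / 2 * (‖x (φ k) - x₀‖ ^ 2 * (B (‖x (φ k) - x₀‖⁻¹ • (x (φ k) - x₀)))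
          (‖x (φ k) - x₀‖⁻¹ • (x (φ k) - x₀))) := hTk.1
    have t3 : L (x (φ k)) - L x₀ ≤ f (x (φ k)) - f x₀ := hLle
    clear_value B L
    linarith [t2, t3]
  set Q' := ‖x (φ k) - x₀‖ ^ 2 with hQ'd
  set δ' := (B d) d with hδ'd
  set Bee := (B (‖x (φ k) - x₀‖⁻¹ • (x (φ k) - x₀))) (‖x (φ k) - x₀‖⁻¹ • (x (φ k) - x₀))
    with hBeed
  set ff := f (x (φ k)) - f x₀ with hffd
  set cc := 1 / ((((φ k) : ℕ) : ℝ) + 1) with hccd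
  clear_value Q' δ' Bee ff cc
  linarith [hA, hB, hC, hE, hup]
end
end
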